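/- arXiv:2601.04679 — 6 statements merged into one kernel-verified Lean document; each statement's English description precedes it below -/
import Mathlib

section
/- Let r ≥ 2, let f: S¹ → S¹ be a C^r expanding map of degree d (so |d| ≥ 2), and let q: S¹ → ℝ be a strictly positive C^{r−1} function with ∫_{S¹} q dLeb = 1 such that q(f(x))·|f'(x)| = |d|·q(x) for every x ∈ S¹. Let h: S¹ → S¹ be the map induced by x̃ ↦ ∫_0^{x̃} q̃(t) dt, where q̃: ℝ → ℝ is the 1-periodic lift of q. Then h is a C^r diffeomorphism of S¹ and there exists ρ ∈ S¹ such that h(f(h⁻¹(x))) = d·x + ρ for every x ∈ S¹. -/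
/-! `H' = q̃ > 0` and `q` has mass one, so `H` is an increasing lift of degree one: `h` is a
circle homeomorphism, and `H` is one derivative smoother than `q`. The hypothesis on `q` says
`|(H ∘ F)'| = |d H'|`; as both sides are continuous and `d H'` never vanishes,
`(H ∘ F)' = ± d H'` with a constant sign, and the minus sign is impossible because
`H ∘ F + d H` would then be constant while it increases by `2d` from `0` to `1`.
So `H ∘ F - d H` is a constant `ρ`, i.e. `h ∘ f = d h + ρ`. -/

open MeasureTheory Function Set

noncomputable section

/-- A map of the circle `S¹ = ℝ/ℤ` together with a lift `F : ℝ → ℝ`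
satisfying `F (x+1) = F x + deg`, where `deg : ℤ` is the degree. -/
structure CircleMapLift where
  toFun : UnitAddCircle → UnitAddCircle
  F : ℝ → ℝ
  deg : ℤ
  lift_add_one : ∀ x : ℝ, F (x + 1) = F x + deg
  proj_lift : ∀ x : ℝ, toFun (x : UnitAddCircle) = (F x : UnitAddCircle)

/-- The circle map is `C^r` (via its lift) and expanding: `|f'(x)| > 1` everywhere. -/
structure IsCrExpanding (r : ℕ∞) (f : CircleMapLift) : Prop where
  contDiff : ContDiff ℝ r f.F
  expanding : ∀ x : ℝ, 1 < |deriv f.F x|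

section CircleLift

variable {H : ℝ → ℝ}

theorem map_add_int_of_map_add_one (h1 : ∀ x, H (x + 1) = H x + 1) (x : ℝ) (n : ℤ) :
    H (x + n) = H x + n := by
  have hper : Periodic (fun y => H y - y) 1 := fun y => by simp only [h1]; ring
  have := hper.int_mul n x
  simp only [mul_one] at this
  linarith

theorem surjective_of_continuous_of_map_add_one (hc : Continuous H)
    (h1 : ∀ x, H (x + 1) = H x + 1) : Surjective H := by
  intro y
  set n := ⌊y - H 0⌋
  have hlo : H n ≤ y := by
    have := map_add_int_of_map_add_one h1 0 n
    rw [zero_add] at this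
    linarith [Int.floor_le (y - H 0)]
  have hhi : y ≤ H (n + 1) := by
    have := map_add_int_of_map_add_one h1 0 (n + 1)
    push_cast at this
    rw [zero_add] at this
    linarith [Int.lt_floor_add_one (y - H 0)]
  obtain ⟨x, -, hx⟩ := intermediate_value_Icc (by linarith) hc.continuousOn ⟨hlo, hhi⟩
  exact ⟨x, hx⟩

theorem UnitAddCircle.injective_of_lift {h : UnitAddCircle → UnitAddCircle}
    (hinj : Injective H) (h1 : ∀ x, H (x + 1) = H x + 1) (hh : ∀ x : ℝ, h x = H x) :
    Injective h := by
  intro z w hzw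
  induction z using QuotientAddGroup.induction_on with | H x =>
  induction w using QuotientAddGroup.induction_on with | H y =>
  rw [hh, hh, ← sub_eq_zero, ← AddCircle.coe_sub, AddCircle.coe_eq_zero_iff] at hzw
  obtain ⟨n, hn⟩ := hzw
  have hxy : x = y + n := hinj <| by
    rw [map_add_int_of_map_add_one h1]
    simp only [zsmul_eq_mul, mul_one] at hn
    linarith
  rw [← sub_eq_zero, ← AddCircle.coe_sub, AddCircle.coe_eq_zero_iff]
  exact ⟨n, by simp [hxy]⟩

theorem UnitAddCircle.bijective_of_lift {h : UnitAddCircle → UnitAddCircle} (hinj : Injective H)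
    (hc : Continuous H) (h1 : ∀ x, H (x + 1) = H x + 1) (hh : ∀ x : ℝ, h x = H x) :
    Bijective h := by
  refine ⟨injective_of_lift hinj h1 hh, fun z => ?_⟩
  obtain ⟨x, rfl⟩ := QuotientAddGroup.mk_surjective z
  obtain ⟨y, rfl⟩ := surjective_of_continuous_of_map_add_one hc h1 x
  exact ⟨y, hh y⟩

end CircleLift

theorem UnitAddCircle.intervalIntegral_add_one {q : UnitAddCircle → ℝ}
    (hq : Continuous fun t : ℝ => q t) (x : ℝ) :
    ∫ t in (0 : ℝ)..x + 1, q t = (∫ t in (0 : ℝ)..x, q t) + ∫ z, q z := by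
  have hper : Periodic (fun t : ℝ => q t) 1 := fun t => by
    simp only [AddCircle.coe_add_period]
  rw [hper.intervalIntegral_add_eq_add 0 x (fun _ _ => hq.intervalIntegrable _ _),
    UnitAddCircle.intervalIntegral_preimage]

theorem contDiff_of_differentiable_of_contDiff_deriv {𝕜 E : Type*} [NontriviallyNormedField 𝕜]
    [NormedAddCommGroup E] [NormedSpace 𝕜 E] {f : 𝕜 → E} {n : ℕ∞} (hn : 1 ≤ n)
    (hf : Differentiable 𝕜 f) (hf' : ContDiff 𝕜 (n - 1) (deriv f)) : ContDiff 𝕜 n f := by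
  have hn' : ((n - 1 : ℕ∞) : WithTop ℕ∞) + 1 = n := by
    exact_mod_cast tsub_add_cancel_of_le hn
  rw [← hn', contDiff_succ_iff_deriv]
  exact ⟨hf, fun h => absurd h WithTop.coe_ne_top, hf'⟩

theorem exists_eq_add_const_of_hasDerivAt {𝕜 G : Type*} [RCLike 𝕜] [NormedAddCommGroup G]
    [NormedSpace 𝕜 G] {φ ψ φ' : 𝕜 → G} (hφ : ∀ x, HasDerivAt φ (φ' x) x)
    (hψ : ∀ x, HasDerivAt ψ (φ' x) x) : ∃ c, ∀ x, φ x = ψ x + c := by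
  obtain ⟨c, hc⟩ := isOpen_univ.exists_eq_add_of_deriv_eq isPreconnected_univ
    (fun x _ => (hφ x).differentiableAt.differentiableWithinAt)
    (fun x _ => (hψ x).differentiableAt.differentiableWithinAt)
    (fun x _ => by rw [(hφ x).deriv, (hψ x).deriv])
  exact ⟨c, fun x => hc (mem_univ x)⟩

theorem exists_comp_eq_mul_add_const {H F q : ℝ → ℝ} {d : ℤ}
    (hH : ∀ x, HasDerivAt H (q x) x) (hq : Continuous q) (hq0 : ∀ x, q x ≠ 0)
    (hH1 : ∀ x, H (x + 1) = H x + 1) (hF : ContDiff ℝ 1 F) (hF1 : ∀ x, F (x + 1) = F x + d)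
    (hd : d ≠ 0) (hcohom : ∀ x, |q (F x) * deriv F x| = |d * q x|) :
    ∃ c, ∀ x, H (F x) = d * H x + c := by
  obtain ⟨hF, hF'⟩ := contDiff_one_iff_deriv.mp hF
  have hHF : ∀ x, HasDerivAt (H ∘ F) (q (F x) * deriv F x) x := fun x =>
    (hH (F x)).comp x (hF x).hasDerivAt
  have hdH : ∀ x, HasDerivAt (fun y => d * H y) (d * q x) x := fun x => (hH x).const_mul _
  have hsign := isPreconnected_univ.eq_or_eq_neg_of_sq_eq
    (f := fun x => q (F x) * deriv F x) (g := fun x => d * q x)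
    ((hq.comp hF.continuous).mul hF').continuousOn (continuous_const.mul hq).continuousOn
    (fun x _ => sq_eq_sq_iff_abs_eq_abs _ _ |>.mpr (hcohom x))
    (fun {x} _ => mul_ne_zero (Int.cast_ne_zero.mpr hd) (hq0 x))
  rcases hsign with hsame | hopposite
  · exact exists_eq_add_const_of_hasDerivAt
      (fun x => (hHF x).congr_deriv (hsame (mem_univ x))) hdH
  · obtain ⟨c, hc⟩ := exists_eq_add_const_of_hasDerivAt
      (fun x => (hHF x).congr_deriv (hopposite (mem_univ x))) (fun x => (hdH x).neg)
    have h0 := hc 0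
    have h1 := hc (0 + 1)
    simp only [comp_apply, Pi.neg_apply] at h0 h1
    rw [hF1, hH1, map_add_int_of_map_add_one hH1] at h1
    exact absurd (by linarith : (d : ℝ) = 0) (Int.cast_ne_zero.mpr hd)

/-- If `q > 0` is a `C^{r-1}` probability density on the circle
satisfying `q(f(x))·|f'(x)| = |d|·q(x)` for a `C^r` expanding map `f` of degree `d`,
then the map `h` induced by `x̃ ↦ ∫₀^x̃ q̃(t) dt` is a `C^r` diffeomorphism of the circle
conjugating `f` to the affine map `x ↦ d·x + ρ` for some `ρ`. -/
theorem density_cohomology_gives_linearizing_conjugacy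
    (r : ℕ∞) (hr : 2 ≤ r)
    (f : CircleMapLift) (hf : IsCrExpanding r f) (d : ℤ) (hdeg : f.deg = d)
    (q : UnitAddCircle → ℝ) (hqpos : ∀ x, 0 < q x)
    (hqreg : ContDiff ℝ (r - 1) (fun t : ℝ => q (t : UnitAddCircle)))
    (hqint : ∫ x, q x ∂(volume : Measure UnitAddCircle) = 1)
    (hcohom : ∀ x : ℝ,
      q (f.toFun (x : UnitAddCircle)) * |deriv f.F x| = |(d : ℝ)| * q (x : UnitAddCircle))
    -- `H` is the primitive of the periodic lift of `q`, and `h` the induced circle map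
    (H : ℝ → ℝ) (hH : ∀ x : ℝ, H x = ∫ t in (0 : ℝ)..x, q (t : UnitAddCircle))
    (h : UnitAddCircle → UnitAddCircle)
    (hh : ∀ x : ℝ, h (x : UnitAddCircle) = (H x : UnitAddCircle)) :
    Function.Bijective h ∧ ContDiff ℝ r H ∧ (∀ x : ℝ, deriv H x ≠ 0) ∧
    ∃ ρ : UnitAddCircle, ∀ y : UnitAddCircle, h (f.toFun y) = d • h y + ρ := by
  set q' : ℝ → ℝ := fun t => q t
  have hr1 : 1 ≤ r := le_trans (by norm_num) hr
  have hq' : Continuous q' := hqreg.continuous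
  have hH' : ∀ x, HasDerivAt H (q' x) x := fun x => by
    rw [funext hH]
    exact (hq'.integral_hasStrictDerivAt 0 x).hasDerivAt
  have hH1 : ∀ x, H (x + 1) = H x + 1 := fun x => by
    rw [hH, hH, UnitAddCircle.intervalIntegral_add_one hq', hqint]
  have hd : d ≠ 0 := by
    rintro rfl
    have h0 := hcohom 0
    rw [Int.cast_zero, abs_zero, zero_mul] at h0
    exact (mul_pos (hqpos _) (one_pos.trans (hf.expanding 0))).ne' h0
  obtain ⟨c, hc⟩ := exists_comp_eq_mul_add_const hH' hq' (fun x => (hqpos x).ne') hH1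
    (hf.contDiff.of_le (by exact_mod_cast hr1)) (fun x => by rw [f.lift_add_one, hdeg]) hd
    (fun x => by simpa only [q', abs_mul, abs_of_pos (hqpos _), ← f.proj_lift] using hcohom x)
  have hHmono : StrictMono H := strictMono_of_hasDerivAt_pos hH' fun x => hqpos x
  refine ⟨UnitAddCircle.bijective_of_lift hHmono.injective
      (continuous_iff_continuousAt.mpr fun x => (hH' x).continuousAt) hH1 hh,
    contDiff_of_differentiable_of_contDiff_deriv hr1 (fun x => (hH' x).differentiableAt) ?_,
    fun x => (hH' x).deriv ▸ (hqpos x).ne', c, fun y => ?_⟩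
  · rwa [show deriv H = q' from funext fun x => (hH' x).deriv]
  · induction y using QuotientAddGroup.induction_on with | H x =>
    rw [f.proj_lift, hh, hh, hc, AddCircle.coe_add, ← AddCircle.coe_zsmul, zsmul_eq_mul]

end
end

section
/- Let V₁ and V₂ be linear subspaces of ℝ^d with V₁ ⊕ V₂ = ℝ^d, such that π(V₁) and π(V₂) are both dense in T^d (so the linear foliations 𝓛_{V₁} and 𝓛_{V₂} are transverse, of complementary dimensions, and minimal). Let H: T^d → T^d be a homeomorphism that is homotopic to the identity and preserves both linear foliations, i.e. H(x + π(V₁)) = H(x) + π(V₁) and H(x + π(V₂)) = H(x) + π(V₂) as subsets of T^d, for every x ∈ T^d. Then H is a translation: there exists v ∈ T^d such that H(x) = x + v for all x ∈ T^d. -/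
/-! Write `δ = H̃ - id` for the displacement of the lift. If `H` preserves `𝓛_V`, then `H̃` maps
`x + V` into `H̃ x + V + ℤ^d`; as `v ↦ H̃ (x + v) - H̃ x` is continuous on the connected space `V`
while `ℤ^d` is countable, in fact `H̃ (x + v) - H̃ x ∈ V`. Hence `δ mod V` is invariant under `V`
and under `ℤ^d`, so it is constant on the dense set `V + ℤ^d`, hence everywhere. Applied to
`V₁` and `V₂`, `δ x - δ 0 ∈ V₁ ∩ V₂ = 0`, so `H̃` is a translation and so is `H`. -/

open MeasureTheory

noncomputable section

/-- The projection `π : ℝ^d → T^d = ℝ^d/ℤ^d`, realized coordinatewise. -/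
def torusProj (d : ℕ) (x : Fin d → ℝ) : Fin d → UnitAddCircle :=
  fun i => (x i : UnitAddCircle)

theorem IsPreconnected.subsingleton_of_countable {X : Type*} [TopologicalSpace X] [T35Space X]
    {s : Set X} (hs : IsPreconnected s) (hc : s.Countable) : s.Subsingleton := by
  have : TotallySeparatedSpace s := hc.totallySeparatedSpace
  exact (totallyDisconnectedSpace_subtype_iff.mp inferInstance) s subset_rfl hs

lemma torusProj_add (d : ℕ) (a b : Fin d → ℝ) :
    torusProj d (a + b) = torusProj d a + torusProj d b := rfl

lemma torusProj_eq_torusProj_iff {d : ℕ} {a b : Fin d → ℝ} :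
    torusProj d a = torusProj d b ↔ ∃ n : Fin d → ℤ, b = a + fun i => (n i : ℝ) := by
  have hcoord : ∀ i, (a i : UnitAddCircle) = b i ↔ ∃ n : ℤ, b i = a i + n := fun i => by
    rw [eq_comm, ← sub_eq_zero, ← AddCircle.coe_sub, AddCircle.coe_eq_zero_iff]
    simp only [zsmul_eq_mul, mul_one, eq_comm (b := b i - a i), sub_eq_iff_eq_add']
  simp only [torusProj, funext_iff, hcoord, Pi.add_apply, Classical.skolem]

lemma isOpenMap_torusProj (d : ℕ) : IsOpenMap (torusProj d) :=
  IsOpenMap.piMap (fun _ => QuotientAddGroup.isOpenMap_coe)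
    (Filter.Eventually.of_forall fun _ => QuotientAddGroup.mk_surjective)

lemma surjective_torusProj (d : ℕ) : Function.Surjective (torusProj d) := fun y =>
  ⟨fun i => (QuotientAddGroup.mk_surjective (y i)).choose,
    funext fun i => (QuotientAddGroup.mk_surjective (y i)).choose_spec⟩

section Foliation

variable {d : ℕ} {V : Submodule ℝ (Fin d → ℝ)}

lemma eq_apply_zero_of_invariant {X : Type*} [TopologicalSpace X] [T2Space X]
    (hdense : Dense (torusProj d '' (V : Set (Fin d → ℝ))))
    {f : (Fin d → ℝ) → X} (hf : Continuous f) (hV : ∀ x, ∀ v ∈ V, f (x + v) = f x)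
    (hℤ : ∀ (x : Fin d → ℝ) (n : Fin d → ℤ), f (x + fun i => (n i : ℝ)) = f x) (x : Fin d → ℝ) :
    f x = f 0 := by
  have hconst : Set.EqOn f (fun _ => f 0) (torusProj d ⁻¹' (torusProj d '' V)) := by
    rintro y ⟨v, hv, hvy⟩
    obtain ⟨n, rfl⟩ := torusProj_eq_torusProj_iff.mp hvy
    have hv0 := hV 0 v hv
    rw [zero_add] at hv0
    exact (hℤ v n).trans hv0
  exact congrFun (Continuous.ext_on (hdense.preimage (isOpenMap_torusProj d)) hf
    continuous_const hconst) x

variable {H : (Fin d → UnitAddCircle) → (Fin d → UnitAddCircle)} {Ht : (Fin d → ℝ) → (Fin d → ℝ)}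

lemma exists_int_lift_sub_mem_of_mapsTo_leaves
    (hHt_proj : ∀ x : Fin d → ℝ, H (torusProj d x) = torusProj d (Ht x))
    (hleaf : ∀ x : Fin d → UnitAddCircle,
      H '' ((fun v => x + torusProj d v) '' (V : Set (Fin d → ℝ))) ⊆
        (fun v => H x + torusProj d v) '' (V : Set (Fin d → ℝ)))
    (x : Fin d → ℝ) {v : Fin d → ℝ} (hv : v ∈ V) :
    ∃ n : Fin d → ℤ, Ht (x + v) - Ht x - (fun i => (n i : ℝ)) ∈ V := by
  obtain ⟨v', hv', hHv⟩ : H (torusProj d x + torusProj d v) ∈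
      (fun u => H (torusProj d x) + torusProj d u) '' (V : Set (Fin d → ℝ)) :=
    hleaf _ ⟨_, ⟨v, hv, rfl⟩, rfl⟩
  have hπ : torusProj d (Ht x + v') = torusProj d (Ht (x + v)) := by
    rw [torusProj_add, ← hHt_proj, ← hHt_proj, torusProj_add]
    exact hHv
  obtain ⟨n, hn⟩ := torusProj_eq_torusProj_iff.mp hπ
  refine ⟨n, ?_⟩
  rw [hn, sub_right_comm, add_sub_cancel_right, add_sub_cancel_left]
  exact hv'

lemma lift_add_sub_mem_of_mapsTo_leaves (hHt_cont : Continuous Ht)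
    (hHt_proj : ∀ x : Fin d → ℝ, H (torusProj d x) = torusProj d (Ht x))
    (hleaf : ∀ x : Fin d → UnitAddCircle,
      H '' ((fun v => x + torusProj d v) '' (V : Set (Fin d → ℝ))) ⊆
        (fun v => H x + torusProj d v) '' (V : Set (Fin d → ℝ)))
    (x : Fin d → ℝ) {v : Fin d → ℝ} (hv : v ∈ V) : Ht (x + v) - Ht x ∈ V := by
  have : IsClosed (V : Set (Fin d → ℝ)) := V.closed_of_finiteDimensional
  set g : (Fin d → ℝ) → (Fin d → ℝ) ⧸ V := fun u => V.mkQ (Ht (x + u) - Ht x)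
  have hg : Continuous g := V.continuous_mkQ.comp <|
    (hHt_cont.comp (continuous_const.add continuous_id)).sub continuous_const
  have hcount : (g '' V).Countable := by
    refine (Set.countable_range fun n : Fin d → ℤ => V.mkQ fun i => (n i : ℝ)).mono ?_
    rintro _ ⟨u, hu, rfl⟩
    obtain ⟨n, hn⟩ := exists_int_lift_sub_mem_of_mapsTo_leaves hHt_proj hleaf x hu
    exact ⟨n, ((Submodule.Quotient.eq V).mpr hn).symm⟩
  have hsub := (V.convex.isPreconnected.image g hg.continuousOn).subsingleton_of_countable hcount
  have hgv : g v = 0 := (hsub ⟨v, hv, rfl⟩ ⟨0, V.zero_mem, rfl⟩).trans (by simp [g])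
  exact (Submodule.Quotient.mk_eq_zero V).mp hgv

lemma lift_sub_sub_mem_of_mapsTo_leaves (hdense : Dense (torusProj d '' (V : Set (Fin d → ℝ))))
    (hHt_cont : Continuous Ht) (hHt_proj : ∀ x : Fin d → ℝ, H (torusProj d x) = torusProj d (Ht x))
    (hHt_per : ∀ (x : Fin d → ℝ) (n : Fin d → ℤ),
      Ht (x + fun i => (n i : ℝ)) = Ht x + fun i => (n i : ℝ))
    (hleaf : ∀ x : Fin d → UnitAddCircle,
      H '' ((fun v => x + torusProj d v) '' (V : Set (Fin d → ℝ))) ⊆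
        (fun v => H x + torusProj d v) '' (V : Set (Fin d → ℝ)))
    (x : Fin d → ℝ) : Ht x - x - Ht 0 ∈ V := by
  have : IsClosed (V : Set (Fin d → ℝ)) := V.closed_of_finiteDimensional
  have hinvV (y v : Fin d → ℝ) (hv : v ∈ V) : V.mkQ (Ht (y + v) - (y + v)) = V.mkQ (Ht y - y) := by
    refine (Submodule.Quotient.eq V).mpr ?_
    rw [show Ht (y + v) - (y + v) - (Ht y - y) = Ht (y + v) - Ht y - v by abel]
    exact V.sub_mem (lift_add_sub_mem_of_mapsTo_leaves hHt_cont hHt_proj hleaf y hv) hv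
  have hinvℤ (y : Fin d → ℝ) (n : Fin d → ℤ) :
      V.mkQ (Ht (y + fun i => (n i : ℝ)) - (y + fun i => (n i : ℝ))) = V.mkQ (Ht y - y) := by
    rw [hHt_per, add_sub_add_right_eq_sub]
  have hconst := eq_apply_zero_of_invariant hdense
    (V.continuous_mkQ.comp (hHt_cont.sub continuous_id)) hinvV hinvℤ x
  simpa using (Submodule.Quotient.eq V).mp hconst

end Foliation

/-- Let `V₁ ⊕ V₂ = ℝ^d` be complementary subspaces whose projections
to the torus are dense (so the linear foliations `𝓛_{V₁}`, `𝓛_{V₂}` are transverse,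
of complementary dimensions, and minimal). Any homeomorphism of `T^d` homotopic to
the identity (i.e. admitting a lift commuting with integer translations) that
preserves both linear foliations is a translation. -/
theorem homeo_preserving_two_minimal_linear_foliations_is_translation
    (d : ℕ) (V₁ V₂ : Submodule ℝ (Fin d → ℝ)) (hcompl : IsCompl V₁ V₂)
    (hdense₁ : Dense (torusProj d '' (V₁ : Set (Fin d → ℝ))))
    (hdense₂ : Dense (torusProj d '' (V₂ : Set (Fin d → ℝ))))
    (H : (Fin d → UnitAddCircle) ≃ₜ (Fin d → UnitAddCircle))
    -- `H` is homotopic to the identity: it admits a continuous lift `Ht` with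
    -- `Ht (x̃ + n) = Ht x̃ + n` for all integer vectors `n`
    (Ht : (Fin d → ℝ) → (Fin d → ℝ)) (hHt_cont : Continuous Ht)
    (hHt_proj : ∀ x : Fin d → ℝ, H (torusProj d x) = torusProj d (Ht x))
    (hHt_per : ∀ (x : Fin d → ℝ) (n : Fin d → ℤ),
      Ht (x + fun i => (n i : ℝ)) = Ht x + fun i => (n i : ℝ))
    -- `H` preserves both linear foliations: `H(x + π(Vⱼ)) = H(x) + π(Vⱼ)`
    (hleaf₁ : ∀ x : Fin d → UnitAddCircle,
      (⇑H) '' ((fun v => x + torusProj d v) '' (V₁ : Set (Fin d → ℝ))) =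
        (fun v => H x + torusProj d v) '' (V₁ : Set (Fin d → ℝ)))
    (hleaf₂ : ∀ x : Fin d → UnitAddCircle,
      (⇑H) '' ((fun v => x + torusProj d v) '' (V₂ : Set (Fin d → ℝ))) =
        (fun v => H x + torusProj d v) '' (V₂ : Set (Fin d → ℝ))) :
    ∃ v : Fin d → UnitAddCircle, ∀ x, H x = x + v := by
  have hHt_translation (x : Fin d → ℝ) : Ht x = x + Ht 0 := by
    have h₁ := lift_sub_sub_mem_of_mapsTo_leaves hdense₁ hHt_cont hHt_proj hHt_per
      (fun y => (hleaf₁ y).subset) x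
    have h₂ := lift_sub_sub_mem_of_mapsTo_leaves hdense₂ hHt_cont hHt_proj hHt_per
      (fun y => (hleaf₂ y).subset) x
    have h₀ : Ht x - x - Ht 0 = 0 := Submodule.disjoint_def.mp hcompl.disjoint _ h₁ h₂
    rwa [sub_sub, sub_eq_zero] at h₀
  refine ⟨torusProj d (Ht 0), fun x => ?_⟩
  obtain ⟨y, rfl⟩ := surjective_torusProj d x
  rw [hHt_proj, hHt_translation, torusProj_add]

end
end

section
/- Let A ∈ GL(2,ℤ) be hyperbolic (no eigenvalue of modulus 1), with stable eigenline E^s and unstable eigenline E^u in ℝ². Let G: T² → T² be a homeomorphism whose induced action on the fundamental group is A, i.e. G admits a continuous lift G̃: ℝ² → ℝ² with π∘G̃ = G∘π and G̃(x̃ + n) = G̃(x̃) + A·n for all x̃ ∈ ℝ² and n ∈ ℤ². Suppose G maps linear stable leaves to linear stable leaves and linear unstable leaves to linear unstable leaves: G(x + π(E^s)) = G(x) + π(E^s) and G(x + π(E^u)) = G(x) + π(E^u) for every x ∈ T². Then G is affine: there exists v ∈ T² such that G(x) = A·x + v for all x ∈ T², where A also denotes the automorphism of T² induced by the matrix A.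 -/
/-! The displacement `φ = G̃ - A` of the lift is continuous and `ℤ²`-periodic. Fix an eigenline
`E` and a linear functional `c` with kernel `E`. An `E`-leaf is mapped by `G̃` into `E + ℤ²`, and
`c (ℤ²)` is countable, so by continuity `c ∘ G̃` is constant along `E`-leaves; since `A E = E`, so
is `c ∘ φ`. An integer vector in `E` is an eigenvector of the unimodular matrix `A` for an
eigenvalue off the unit circle, so iterating `A` or `A⁻¹` contracts it to an integer vector of
norm `< 1`: it is zero. Hence `c (ℤ²)` is dense in `ℝ`, `E + ℤ²` is dense in `ℝ²`, and `c ∘ φ`,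
being invariant under it, is constant. Doing this for both eigenlines makes `φ` constant. -/

noncomputable section

/-- The projection `π : ℝ² → T² = ℝ²/ℤ²`, realized coordinatewise. -/
def torusProj2 (x : Fin 2 → ℝ) : Fin 2 → UnitAddCircle :=
  fun i => (x i : UnitAddCircle)

open Filter Matrix Topology

namespace Matrix

variable {n : Type*} [Fintype n]

theorem pow_mulVec_eq_smul {R : Type*} [CommSemiring R] [DecidableEq n] {M : Matrix n n R} {l : R}
    {v : n → R} (hv : M *ᵥ v = l • v) (k : ℕ) : (M ^ k) *ᵥ v = l ^ k • v := by
  induction k with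
  | zero => simp
  | succ k ih => rw [pow_succ', ← mulVec_mulVec, ih, mulVec_smul, hv, smul_smul, pow_succ]

theorem map_intCast_mulVec {m R : Type*} [Ring R] (A : Matrix m n ℤ) (w : n → ℤ) :
    A.map (Int.cast : ℤ → R) *ᵥ (fun i => (w i : R)) = fun i => ((A *ᵥ w) i : R) :=
  funext fun i => (RingHom.map_mulVec (Int.castRingHom R) A w i).symm

theorem eq_zero_of_mulVec_intCast_eq_smul_of_abs_lt_one [DecidableEq n] (A : Matrix n n ℤ) {l : ℝ}
    (hl0 : l ≠ 0) (hl : |l| < 1) {w : n → ℤ}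
    (hw : A.map (Int.cast : ℤ → ℝ) *ᵥ (fun i => (w i : ℝ)) = l • fun i => (w i : ℝ)) :
    w = 0 := by
  by_contra hne
  obtain ⟨i, hi⟩ := Function.ne_iff.mp hne
  have hpow (k : ℕ) : (((A ^ k) *ᵥ w) i : ℝ) = l ^ k * w i := by
    have hmap : (A ^ k).map (Int.cast : ℤ → ℝ) = A.map Int.cast ^ k :=
      Matrix.map_pow A (Int.castRingHom ℝ) k
    rw [← congrFun (map_intCast_mulVec (A ^ k) w) i, hmap, pow_mulVec_eq_smul hw]
    rfl
  -- the integers `(A ^ k *ᵥ w) i = l ^ k * w i` tend to `0`, so one of them vanishes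
  have hlim : Tendsto (fun k : ℕ => l ^ k * w i) atTop (𝓝 0) := by
    simpa using (tendsto_pow_atTop_nhds_zero_of_abs_lt_one hl).mul_const (w i : ℝ)
  obtain ⟨k, hk⟩ := (hlim.eventually (Metric.ball_mem_nhds 0 one_pos)).exists
  have hzero : (A ^ k *ᵥ w) i = 0 := by
    rw [← Int.abs_lt_one_iff, ← Int.cast_lt (R := ℝ), Int.cast_abs, hpow]
    simpa using hk
  have := hpow k
  rw [hzero, Int.cast_zero, eq_comm] at this
  exact mul_ne_zero (pow_ne_zero k hl0) (Int.cast_ne_zero.mpr hi) this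

theorem eq_zero_of_mulVec_intCast_eq_smul_of_abs_ne_one [DecidableEq n] (A : Matrix n n ℤ)
    (hA : IsUnit A.det) {l : ℝ} (hl : |l| ≠ 1) {w : n → ℤ}
    (hw : A.map (Int.cast : ℤ → ℝ) *ᵥ (fun i => (w i : ℝ)) = l • fun i => (w i : ℝ)) :
    w = 0 := by
  have hmul : A⁻¹.map (Int.cast : ℤ → ℝ) * A.map Int.cast = 1 := by
    simpa [nonsing_inv_mul A hA] using
      (Matrix.map_mul (L := A⁻¹) (M := A) (f := Int.castRingHom ℝ)).symm
  have hinv : A⁻¹.map (Int.cast : ℤ → ℝ) *ᵥ (l • fun i => (w i : ℝ)) = fun i => (w i : ℝ) := by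
    rw [← hw, mulVec_mulVec, hmul, one_mulVec]
  rcases hl.lt_or_gt with hlt | hgt
  · rcases eq_or_ne l 0 with rfl | hl0
    · ext i
      simpa using (congrFun hinv i).symm
    · exact eq_zero_of_mulVec_intCast_eq_smul_of_abs_lt_one A hl0 hlt hw
  · have hl0 : l ≠ 0 := by rintro rfl; norm_num at hgt
    refine eq_zero_of_mulVec_intCast_eq_smul_of_abs_lt_one A⁻¹ (inv_ne_zero hl0) ?_ ?_
    · rw [abs_inv]; exact inv_lt_one_of_one_lt₀ hgt
    · rw [mulVec_smul] at hinv
      exact (eq_inv_smul_iff₀ hl0).mpr hinv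

end Matrix

namespace Submodule

variable {K V : Type*} [Field K] [AddCommGroup V] [Module K V]

theorem exists_linearMap_ker_eq [FiniteDimensional K V] {E : Submodule K V}
    (h : Module.finrank K E + 1 = Module.finrank K V) : ∃ c : V →ₗ[K] K, LinearMap.ker c = E := by
  have hquot : Module.finrank K (V ⧸ E) = Module.finrank K K := by
    have := E.finrank_quotient_add_finrank
    rw [Module.finrank_self]
    omega
  exact ⟨(LinearEquiv.ofFinrankEq _ _ hquot).toLinearMap ∘ₗ E.mkQ, by
    rw [LinearEquiv.ker_comp, ker_mkQ]⟩

theorem inf_eq_bot_of_forall_apply_eq_smul {f : V → V} {E F : Submodule K V} {a b : K}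
    (hE : ∀ v ∈ E, f v = a • v) (hF : ∀ v ∈ F, f v = b • v) (hab : a ≠ b) : E ⊓ F = ⊥ := by
  rw [eq_bot_iff]
  rintro v ⟨hvE, hvF⟩
  have : (a - b) • v = 0 := by rw [sub_smul, ← hE v hvE, ← hF v hvF, sub_self]
  exact (smul_eq_zero.mp this).resolve_left (sub_ne_zero.mpr hab)

end Submodule

theorem dense_addSubgroupClosure_pair_of_linearIndependent {a b : ℝ}
    (h : LinearIndependent ℤ ![a, b]) : Dense (AddSubgroup.closure {a, b} : Set ℝ) := by
  rw [LinearIndependent.pair_iff] at h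
  have hb : b ≠ 0 := fun hb => by simpa using h 0 1 (by simp [hb])
  rw [dense_addSubgroupClosure_pair_iff]
  rintro ⟨r, hr⟩
  have hrb : (r.num : ℝ) * b = r.den * a := by
    have hnum : (r.num : ℝ) = r.den * (a / b) := by
      rw [← hr]; exact_mod_cast (Rat.den_mul_eq_num r).symm
    rw [hnum]; field_simp
  simpa using (h r.den (-r.num) (by simp only [zsmul_eq_mul]; push_cast; linear_combination -hrb)).1

theorem dense_setOf_sub_intCast_mem_ker (c : (Fin 2 → ℝ) →ₗ[ℝ] ℝ)
    (hc : ∀ n : Fin 2 → ℤ, (fun i => (n i : ℝ)) ∈ LinearMap.ker c → n = 0) :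
    Dense {x | ∃ n : Fin 2 → ℤ, x - (fun i => (n i : ℝ)) ∈ LinearMap.ker c} := by
  have hcast (n : Fin 2 → ℤ) :
      c (fun i => (n i : ℝ)) = n 0 • c (Pi.single 0 1) + n 1 • c (Pi.single 1 1) := by
    rw [← map_zsmul, ← map_zsmul, ← map_add]
    congr 1
    ext i; fin_cases i <;> simp
  have hli : LinearIndependent ℤ ![c (Pi.single 0 1), c (Pi.single 1 1)] := by
    refine LinearIndependent.pair_iff.mpr fun s t hst => ?_
    have := hc ![s, t] (by simpa [hcast] using hst)
    exact ⟨by simpa using congrFun this 0, by simpa using congrFun this 1⟩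
  have hc0 : c ≠ 0 := fun h0 => by simpa [h0] using hli.ne_zero 0
  refine ((dense_addSubgroupClosure_pair_of_linearIndependent hli).preimage
    (c.isOpenMap_of_finiteDimensional (LinearMap.surjective hc0))).mono ?_
  intro x hx
  obtain ⟨s, t, hst⟩ := AddSubgroup.mem_closure_pair.mp hx
  refine ⟨![s, t], ?_⟩
  rw [LinearMap.mem_ker, map_sub, hcast, ← hst]
  simp

theorem apply_eq_apply_zero_of_periodic {g : (Fin 2 → ℝ) → ℝ} (hg : Continuous g)
    (c : (Fin 2 → ℝ) →ₗ[ℝ] ℝ)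
    (hc : ∀ n : Fin 2 → ℤ, (fun i => (n i : ℝ)) ∈ LinearMap.ker c → n = 0)
    (hker : ∀ v ∈ LinearMap.ker c, Function.Periodic g v)
    (hint : ∀ n : Fin 2 → ℤ, Function.Periodic g fun i => (n i : ℝ)) (x : Fin 2 → ℝ) :
    g x = g 0 := by
  refine congrFun (Continuous.ext_on (dense_setOf_sub_intCast_mem_ker c hc) hg
    continuous_const ?_) x
  rintro y ⟨n, hn⟩
  calc g y = g ((y - fun i => (n i : ℝ)) + fun i => (n i : ℝ)) := by rw [sub_add_cancel]
    _ = g (0 + (y - fun i => (n i : ℝ))) := by rw [hint n, zero_add]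
    _ = g 0 := hker _ hn 0

theorem torusProj2_add (a b : Fin 2 → ℝ) : torusProj2 (a + b) = torusProj2 a + torusProj2 b :=
  rfl

theorem exists_intCast_eq_add_of_torusProj2_eq {a b : Fin 2 → ℝ}
    (h : torusProj2 a = torusProj2 b) : ∃ n : Fin 2 → ℤ, b = a + fun i => (n i : ℝ) := by
  have hi (i : Fin 2) : ∃ k : ℤ, b i = a i + k := by
    have h0 : ((b i - a i : ℝ) : UnitAddCircle) = 0 := by
      have hab : ((a i : ℝ) : UnitAddCircle) = b i := congrFun h i
      rw [AddCircle.coe_sub, ← hab, sub_self]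
    obtain ⟨k, hk⟩ := (AddCircle.coe_eq_zero_iff 1).mp h0
    exact ⟨k, by rw [zsmul_one] at hk; linarith⟩
  choose n hn using hi
  exact ⟨n, funext hn⟩

theorem exists_lift_add_eq_of_image_leaf_subset
    {G : (Fin 2 → UnitAddCircle) → (Fin 2 → UnitAddCircle)} {Gt : (Fin 2 → ℝ) → (Fin 2 → ℝ)}
    (hGt_proj : ∀ x, G (torusProj2 x) = torusProj2 (Gt x)) {E : Set (Fin 2 → ℝ)}
    (hleaf : ∀ x, G '' ((fun v => x + torusProj2 v) '' E) ⊆ (fun v => G x + torusProj2 v) '' E)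
    (x : Fin 2 → ℝ) {v : Fin 2 → ℝ} (hv : v ∈ E) :
    ∃ w ∈ E, ∃ n : Fin 2 → ℤ, Gt (x + v) = Gt x + w + fun i => (n i : ℝ) := by
  obtain ⟨w, hw, hGw⟩ := hleaf (torusProj2 x) ⟨_, ⟨v, hv, rfl⟩, rfl⟩
  dsimp only at hGw
  rw [← torusProj2_add, hGt_proj, hGt_proj, ← torusProj2_add] at hGw
  obtain ⟨n, hn⟩ := exists_intCast_eq_add_of_torusProj2_eq hGw
  exact ⟨w, hw, n, hn⟩

theorem sub_mem_ker_of_forall_exists_add_eq {Gt : (Fin 2 → ℝ) → (Fin 2 → ℝ)}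
    (hGt : Continuous Gt) (c : (Fin 2 → ℝ) →ₗ[ℝ] ℝ)
    (hleaf : ∀ x, ∀ v ∈ LinearMap.ker c, ∃ w ∈ LinearMap.ker c, ∃ n : Fin 2 → ℤ,
      Gt (x + v) = Gt x + w + fun i => (n i : ℝ))
    (x : Fin 2 → ℝ) {v : Fin 2 → ℝ} (hv : v ∈ LinearMap.ker c) :
    Gt (x + v) - Gt x ∈ LinearMap.ker c := by
  set F : ℝ → ℝ := fun t => c (Gt (x + t • v) - Gt x)
  have hF : Continuous F := by
    have := c.continuous_of_finiteDimensional
    fun_prop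
  have hrange : Set.range F ⊆ Set.range fun n : Fin 2 → ℤ => c (fun i => (n i : ℝ)) := by
    rintro _ ⟨t, rfl⟩
    obtain ⟨w, hw, n, hn⟩ := hleaf x (t • v) (Submodule.smul_mem _ t hv)
    refine ⟨n, ?_⟩
    simp only [F, hn, add_assoc, add_sub_cancel_left, map_add, LinearMap.mem_ker.mp hw, zero_add]
  have h10 : F 1 = F 0 :=
    (Set.countable_range _).isTotallyDisconnected _ hrange (isPreconnected_range hF)
      ⟨1, rfl⟩ ⟨0, rfl⟩
  simpa [F] using h10

theorem apply_sub_mulVec_eq_apply_zero (A : Matrix (Fin 2) (Fin 2) ℤ) (hA : IsUnit A.det)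
    {G : (Fin 2 → UnitAddCircle) → (Fin 2 → UnitAddCircle)} {Gt : (Fin 2 → ℝ) → (Fin 2 → ℝ)}
    (hGt_cont : Continuous Gt) (hGt_proj : ∀ x, G (torusProj2 x) = torusProj2 (Gt x))
    (hGt_per : ∀ (x : Fin 2 → ℝ) (n : Fin 2 → ℤ),
      Gt (x + fun i => (n i : ℝ)) = Gt x + fun i => ((A *ᵥ n) i : ℝ))
    (c : (Fin 2 → ℝ) →ₗ[ℝ] ℝ) {l : ℝ} (hl : |l| ≠ 1)
    (hc : ∀ v ∈ LinearMap.ker c, A.map (Int.cast : ℤ → ℝ) *ᵥ v = l • v)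
    (hleaf : ∀ x, G '' ((fun v => x + torusProj2 v) '' (LinearMap.ker c : Set (Fin 2 → ℝ))) ⊆
      (fun v => G x + torusProj2 v) '' (LinearMap.ker c : Set (Fin 2 → ℝ)))
    (x : Fin 2 → ℝ) : c (Gt x - A.map (Int.cast : ℤ → ℝ) *ᵥ x) = c (Gt 0) := by
  set A' := A.map (Int.cast : ℤ → ℝ)
  have hno_int (n : Fin 2 → ℤ) (hn : (fun i => (n i : ℝ)) ∈ LinearMap.ker c) : n = 0 :=
    eq_zero_of_mulVec_intCast_eq_smul_of_abs_ne_one A hA hl (hc _ hn)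
  have hsub := sub_mem_ker_of_forall_exists_add_eq hGt_cont c
    fun y _ hv => exists_lift_add_eq_of_image_leaf_subset hGt_proj hleaf y hv
  have hcont : Continuous fun y => c (Gt y - A' *ᵥ y) := by
    have := c.continuous_of_finiteDimensional
    fun_prop
  have hker (v) (hv : v ∈ LinearMap.ker c) :
      Function.Periodic (fun y => c (Gt y - A' *ᵥ y)) v := fun y => by
    have hAv : c (A' *ᵥ v) = 0 := by rw [hc v hv, map_smul, LinearMap.mem_ker.mp hv, smul_zero]
    calc c (Gt (y + v) - A' *ᵥ (y + v))
        = c (Gt (y + v) - Gt y) + c (Gt y - A' *ᵥ y) - c (A' *ᵥ v) := by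
          rw [mulVec_add, ← map_add, ← map_sub]
          congr 1
          abel
      _ = c (Gt y - A' *ᵥ y) := by rw [LinearMap.mem_ker.mp (hsub y hv), hAv]; ring
  have hint (n : Fin 2 → ℤ) :
      Function.Periodic (fun y => c (Gt y - A' *ᵥ y)) fun i => (n i : ℝ) := fun y => by
    simp only
    rw [hGt_per, mulVec_add, map_intCast_mulVec]
    congr 1
    abel
  simpa using apply_eq_apply_zero_of_periodic hcont c hno_int hker hint x

theorem homeo_preserving_eigenfoliations_is_affine_general
    (A : Matrix (Fin 2) (Fin 2) ℤ) (hdet : A.det = 1 ∨ A.det = -1)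
    (Es Eu : Submodule ℝ (Fin 2 → ℝ))
    (hEs : Module.finrank ℝ Es = 1 ∧ ∃ ls : ℝ, |ls| < 1 ∧
      ∀ v ∈ Es, (A.map (Int.cast : ℤ → ℝ)).mulVec v = ls • v)
    (hEu : Module.finrank ℝ Eu = 1 ∧ ∃ lu : ℝ, 1 < |lu| ∧
      ∀ v ∈ Eu, (A.map (Int.cast : ℤ → ℝ)).mulVec v = lu • v)
    (G : (Fin 2 → UnitAddCircle) ≃ₜ (Fin 2 → UnitAddCircle))
    -- `G` admits a continuous lift `Gt` with `Gt (x̃ + n) = Gt x̃ + A·n`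
    (Gt : (Fin 2 → ℝ) → (Fin 2 → ℝ)) (hGt_cont : Continuous Gt)
    (hGt_proj : ∀ x : Fin 2 → ℝ, G (torusProj2 x) = torusProj2 (Gt x))
    (hGt_per : ∀ (x : Fin 2 → ℝ) (n : Fin 2 → ℤ),
      Gt (x + fun i => (n i : ℝ)) = Gt x + fun i => ((A.mulVec n) i : ℝ))
    -- `G` maps linear stable/unstable leaves to linear stable/unstable leaves
    (hleafS : ∀ x : Fin 2 → UnitAddCircle,
      (⇑G) '' ((fun v => x + torusProj2 v) '' (Es : Set (Fin 2 → ℝ))) =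
        (fun v => G x + torusProj2 v) '' (Es : Set (Fin 2 → ℝ)))
    (hleafU : ∀ x : Fin 2 → UnitAddCircle,
      (⇑G) '' ((fun v => x + torusProj2 v) '' (Eu : Set (Fin 2 → ℝ))) =
        (fun v => G x + torusProj2 v) '' (Eu : Set (Fin 2 → ℝ))) :
    ∃ v : Fin 2 → UnitAddCircle, ∀ xt : Fin 2 → ℝ,
      G (torusProj2 xt) = torusProj2 ((A.map (Int.cast : ℤ → ℝ)).mulVec xt) + v := by
  obtain ⟨hdimS, ls, hls, hlsE⟩ := hEs
  obtain ⟨hdimU, lu, hlu, hluE⟩ := hEu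
  have hA : IsUnit A.det := Int.isUnit_iff.mpr hdet
  have hbot : Es ⊓ Eu = ⊥ :=
    Submodule.inf_eq_bot_of_forall_apply_eq_smul hlsE hluE fun h => by rw [h] at hls; linarith
  obtain ⟨cs, rfl⟩ := Submodule.exists_linearMap_ker_eq (E := Es) (by simp [hdimS])
  obtain ⟨cu, rfl⟩ := Submodule.exists_linearMap_ker_eq (E := Eu) (by simp [hdimU])
  have hs := apply_sub_mulVec_eq_apply_zero A hA hGt_cont hGt_proj hGt_per cs hls.ne hlsE
    fun x => (hleafS x).le
  have hu := apply_sub_mulVec_eq_apply_zero A hA hGt_cont hGt_proj hGt_per cu hlu.ne' hluE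
    fun x => (hleafU x).le
  refine ⟨torusProj2 (Gt 0), fun x => ?_⟩
  have hmem : Gt x - A.map (Int.cast : ℤ → ℝ) *ᵥ x - Gt 0 ∈ LinearMap.ker cs ⊓ LinearMap.ker cu :=
    Submodule.mem_inf.mpr ⟨by rw [LinearMap.mem_ker, map_sub, hs x, sub_self],
      by rw [LinearMap.mem_ker, map_sub, hu x, sub_self]⟩
  rw [hbot, Submodule.mem_bot, sub_sub, sub_eq_zero] at hmem
  rw [hGt_proj, hmem, torusProj2_add]

/-- Let `A ∈ GL(2,ℤ)` be hyperbolic with stable eigenline `Eˢ` and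
unstable eigenline `Eᵘ`. A homeomorphism `G` of `T²` acting as `A` on the fundamental
group (i.e. admitting a lift `G̃` with `G̃(x̃+n) = G̃(x̃) + A·n`) that sends linear
stable leaves to linear stable leaves and linear unstable leaves to linear unstable
leaves is affine: `G(x) = A·x + v` for some `v ∈ T²`. -/
theorem homeo_preserving_eigenfoliations_is_affine
    (A : Matrix (Fin 2) (Fin 2) ℤ) (hdet : A.det = 1 ∨ A.det = -1)
    (hhyp : ∀ z : ℂ, ((A.map (Int.cast : ℤ → ℂ)).charpoly).IsRoot z → ‖z‖ ≠ 1)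
    (Es Eu : Submodule ℝ (Fin 2 → ℝ))
    (hEs : Module.finrank ℝ Es = 1 ∧ ∃ ls : ℝ, |ls| < 1 ∧
      ∀ v ∈ Es, (A.map (Int.cast : ℤ → ℝ)).mulVec v = ls • v)
    (hEu : Module.finrank ℝ Eu = 1 ∧ ∃ lu : ℝ, 1 < |lu| ∧
      ∀ v ∈ Eu, (A.map (Int.cast : ℤ → ℝ)).mulVec v = lu • v)
    (G : (Fin 2 → UnitAddCircle) ≃ₜ (Fin 2 → UnitAddCircle))
    -- `G` admits a continuous lift `Gt` with `Gt (x̃ + n) = Gt x̃ + A·n`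
    (Gt : (Fin 2 → ℝ) → (Fin 2 → ℝ)) (hGt_cont : Continuous Gt)
    (hGt_proj : ∀ x : Fin 2 → ℝ, G (torusProj2 x) = torusProj2 (Gt x))
    (hGt_per : ∀ (x : Fin 2 → ℝ) (n : Fin 2 → ℤ),
      Gt (x + fun i => (n i : ℝ)) = Gt x + fun i => ((A.mulVec n) i : ℝ))
    -- `G` maps linear stable/unstable leaves to linear stable/unstable leaves
    (hleafS : ∀ x : Fin 2 → UnitAddCircle,
      (⇑G) '' ((fun v => x + torusProj2 v) '' (Es : Set (Fin 2 → ℝ))) =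
        (fun v => G x + torusProj2 v) '' (Es : Set (Fin 2 → ℝ)))
    (hleafU : ∀ x : Fin 2 → UnitAddCircle,
      (⇑G) '' ((fun v => x + torusProj2 v) '' (Eu : Set (Fin 2 → ℝ))) =
        (fun v => G x + torusProj2 v) '' (Eu : Set (Fin 2 → ℝ))) :
    ∃ v : Fin 2 → UnitAddCircle, ∀ xt : Fin 2 → ℝ,
      G (torusProj2 xt) = torusProj2 ((A.map (Int.cast : ℤ → ℝ)).mulVec xt) + v :=
  homeo_preserving_eigenfoliations_is_affine_general A hdet Es Eu hEs hEu G Gt hGt_cont hGt_proj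
    hGt_per hleafS hleafU

end
end

section
/- Let A ∈ GL(2,ℤ) be a matrix all of whose entries are positive. Then A is hyperbolic: it has two real eigenvalues λ, μ with |λ| > 1 > |μ|. Moreover A uniformly expands the closed first and third quadrants: for every vector v = (x, y) ∈ ℝ² with x·y ≥ 0 one has ‖A·v‖ ≥ √2·‖v‖, where ‖·‖ is the Euclidean norm. -/
open Polynomial
noncomputable section

private lemma charpoly_fin_two' (M : Matrix (Fin 2) (Fin 2) ℝ) :
    M.charpoly = X^2 - C (M 0 0 + M 1 1) * X + C (M 0 0 * M 1 1 - M 0 1 * M 1 0) := by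
  rw [Matrix.charpoly, Matrix.det_fin_two, Matrix.charmatrix_apply_eq,
    Matrix.charmatrix_apply_eq, Matrix.charmatrix_apply_ne _ _ _ (by decide),
    Matrix.charmatrix_apply_ne _ _ _ (by decide)]
  simp [C_mul, C_add, C_sub]
  ring

private lemma expand_aux (a b c d x y : ℝ) (ha : 1 ≤ a) (hb : 1 ≤ b) (hc : 1 ≤ c) (hd : 1 ≤ d)
    (hx : 0 ≤ x) (hy : 0 ≤ y) :
    2 * (x^2 + y^2) ≤ (a*x+b*y)^2 + (c*x+d*y)^2 := by
  have h1 : x + y ≤ a*x + b*y := by nlinarith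
  have h2 : x + y ≤ c*x + d*y := by nlinarith
  have hxy : 0 ≤ x + y := by linarith
  have := mul_self_le_mul_self hxy h1
  have := mul_self_le_mul_self hxy h2
  nlinarith [mul_nonneg hx hy]

private lemma expand_key (a b c d x y : ℝ) (ha : 1 ≤ a) (hb : 1 ≤ b) (hc : 1 ≤ c) (hd : 1 ≤ d)
    (hxy : 0 ≤ x * y) :
    2 * (x^2 + y^2) ≤ (a*x+b*y)^2 + (c*x+d*y)^2 := by
  rcases le_or_gt 0 x with hx | hx
  · rcases le_or_gt 0 y with hy | hy
    · exact expand_aux a b c d x y ha hb hc hd hx hy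
    · have hx0 : x = 0 := le_antisymm (by nlinarith) hx
      subst hx0
      have := expand_aux a b c d 0 (-y) ha hb hc hd le_rfl (by linarith)
      nlinarith
  · have hy : y ≤ 0 := by nlinarith
    have := expand_aux a b c d (-x) (-y) ha hb hc hd (by linarith) (by linarith)
    nlinarith

private lemma eig_aux (t δ : ℝ)
    (hcase : (3 ≤ t ∧ δ = 1) ∨ (2 ≤ t ∧ δ = -1)) :
    ∃ lu ls : ℝ, 1 < |lu| ∧ |ls| < 1 ∧
      (X^2 - C t * X + C δ : ℝ[X]) = (X - C lu) * (X - C ls) := by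
  have habs : |δ| = 1 := by rcases hcase with ⟨_, h⟩ | ⟨_, h⟩ <;> rw [h] <;> norm_num
  have ht2 : 2 ≤ t := by rcases hcase with ⟨h, _⟩ | ⟨h, _⟩ <;> linarith
  have hDpos : 5 ≤ t^2 - 4*δ := by
    rcases hcase with ⟨h1, h2⟩ | ⟨h1, h2⟩ <;> rw [h2] <;> nlinarith
  set s : ℝ := Real.sqrt (t^2 - 4*δ) with hs
  have hs2 : s^2 = t^2 - 4*δ := Real.sq_sqrt (by linarith)
  have hspos : 2 ≤ s := by
    rw [hs, show (2:ℝ) = Real.sqrt 4 by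
      rw [show (4:ℝ) = 2^2 by norm_num, Real.sqrt_sq]; norm_num]
    exact Real.sqrt_le_sqrt (by linarith)
  have hlu : 1 < (t+s)/2 := by nlinarith
  have hprod : (t+s)/2 * ((t-s)/2) = δ := by field_simp; nlinarith
  refine ⟨(t+s)/2, (t-s)/2, ?_, ?_, ?_⟩
  · rw [abs_of_pos (by linarith)]; exact hlu
  · have : |(t-s)/2| * ((t+s)/2) = 1 := by
      rw [← abs_of_pos (show (0:ℝ) < (t+s)/2 by linarith), ← abs_mul, mul_comm, hprod, habs]
    nlinarith [abs_nonneg ((t-s)/2)]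
  · have hsum : t = (t+s)/2 + (t-s)/2 := by ring
    rw [← hprod] at *
    nth_rewrite 1 [hsum]
    rw [C_add, C_mul]
    ring

/-- A positive matrix `A ∈ GL(2,ℤ)` is hyperbolic, with two real
eigenvalues `λ, μ` satisfying `|λ| > 1 > |μ|`, and it uniformly expands the closed
first and third quadrants: `‖A·v‖ ≥ √2·‖v‖` whenever `v = (x,y)` with `x·y ≥ 0`. -/
theorem positive_gl2z_matrix_hyperbolic_and_expands_quadrants
    (A : Matrix (Fin 2) (Fin 2) ℤ) (hdet : A.det = 1 ∨ A.det = -1)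
    (hpos : ∀ i j, 0 < A i j) :
    (∃ lu ls : ℝ, 1 < |lu| ∧ |ls| < 1 ∧
      (A.map (Int.cast : ℤ → ℝ)).charpoly = (X - C lu) * (X - C ls)) ∧
    ∀ v : EuclideanSpace ℝ (Fin 2), 0 ≤ v 0 * v 1 →
      Real.sqrt 2 * ‖v‖ ≤ ‖Matrix.toEuclideanLin (A.map (Int.cast : ℤ → ℝ)) v‖ := by
  have ha : (1:ℝ) ≤ (A 0 0 : ℝ) := by exact_mod_cast hpos 0 0
  have hb : (1:ℝ) ≤ (A 0 1 : ℝ) := by exact_mod_cast hpos 0 1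
  have hc : (1:ℝ) ≤ (A 1 0 : ℝ) := by exact_mod_cast hpos 1 0
  have hd : (1:ℝ) ≤ (A 1 1 : ℝ) := by exact_mod_cast hpos 1 1
  rw [Matrix.det_fin_two] at hdet
  constructor
  · have hcase : (3 ≤ (A 0 0 : ℝ) + (A 1 1 : ℝ) ∧
        (A 0 0 : ℝ) * (A 1 1 : ℝ) - (A 0 1 : ℝ) * (A 1 0 : ℝ) = 1) ∨
        (2 ≤ (A 0 0 : ℝ) + (A 1 1 : ℝ) ∧
        (A 0 0 : ℝ) * (A 1 1 : ℝ) - (A 0 1 : ℝ) * (A 1 0 : ℝ) = -1) := by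
      rcases hdet with h | h
      · left
        have h3 : (3:ℤ) ≤ A 0 0 + A 1 1 := by
          nlinarith [hpos 0 0, hpos 0 1, hpos 1 0, hpos 1 1]
        constructor
        · exact_mod_cast h3
        · exact_mod_cast congrArg (Int.cast : ℤ → ℝ) h
      · right
        constructor
        · have : (2:ℤ) ≤ A 0 0 + A 1 1 := by linarith [hpos 0 0, hpos 1 1]
          exact_mod_cast this
        · exact_mod_cast congrArg (Int.cast : ℤ → ℝ) h
    obtain ⟨lu, ls, h1, h2, h3⟩ := eig_aux _ _ hcase
    refine ⟨lu, ls, h1, h2, ?_⟩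
    rw [charpoly_fin_two']
    have e00 : (A.map (Int.cast : ℤ → ℝ)) 0 0 = (A 0 0 : ℝ) := rfl
    have e01 : (A.map (Int.cast : ℤ → ℝ)) 0 1 = (A 0 1 : ℝ) := rfl
    have e10 : (A.map (Int.cast : ℤ → ℝ)) 1 0 = (A 1 0 : ℝ) := rfl
    have e11 : (A.map (Int.cast : ℤ → ℝ)) 1 1 = (A 1 1 : ℝ) := rfl
    rw [e00, e01, e10, e11, h3]
  · intro v hv
    have hw0 : (Matrix.toEuclideanLin (A.map (Int.cast : ℤ → ℝ)) v) 0
        = (A 0 0 : ℝ) * v 0 + (A 0 1 : ℝ) * v 1 := by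
      simp [Matrix.toEuclideanLin_apply, Matrix.mulVec, dotProduct, Fin.sum_univ_two]
    have hw1 : (Matrix.toEuclideanLin (A.map (Int.cast : ℤ → ℝ)) v) 1
        = (A 1 0 : ℝ) * v 0 + (A 1 1 : ℝ) * v 1 := by
      simp [Matrix.toEuclideanLin_apply, Matrix.mulVec, dotProduct, Fin.sum_univ_two]
    have hnv : ‖v‖ = Real.sqrt (v 0 ^ 2 + v 1 ^ 2) := by
      rw [EuclideanSpace.norm_eq]
      simp [Fin.sum_univ_two, Real.norm_eq_abs, sq_abs]
    have hnw : ‖Matrix.toEuclideanLin (A.map (Int.cast : ℤ → ℝ)) v‖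
        = Real.sqrt ((Matrix.toEuclideanLin (A.map (Int.cast : ℤ → ℝ)) v) 0 ^ 2
          + (Matrix.toEuclideanLin (A.map (Int.cast : ℤ → ℝ)) v) 1 ^ 2) := by
      rw [EuclideanSpace.norm_eq]
      simp [Fin.sum_univ_two, Real.norm_eq_abs, sq_abs]
    rw [hnv, hnw, ← Real.sqrt_mul (by norm_num), hw0, hw1]
    apply Real.sqrt_le_sqrt
    exact expand_key _ _ _ _ _ _ ha hb hc hd hv

end
end

section
/- Let A₁,…,A_m ∈ GL(2,ℤ) be matrices all of whose entries are positive. Then the family {A_i} is irreducible — that is, the only linear subspaces V ⊆ ℝ² with A_i·V = V for every i = 1,…,m are V = {0} and V = ℝ² — if and only if there exist indices i ≠ j such that A_i·A_j ≠ A_j·A_i. -/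
noncomputable section


lemma aux_sq_sub (j T : ℤ) (hT : 3 ≤ T) : j^2 ≠ T^2 - 4 := by
  intro h
  have h1 : j^2 < T^2 := by nlinarith
  have h2 : (T-1)^2 < j^2 := by nlinarith
  have hjT : |j| < T := by
    by_contra h'; push_neg at h'; nlinarith [sq_abs j]
  have : |j| ≤ T - 1 := by omega
  nlinarith [sq_abs j, abs_nonneg j]

lemma aux_sq_add (j T : ℤ) (hT : 2 ≤ T) : j^2 ≠ T^2 + 4 := by
  intro h
  have h1 : T^2 < j^2 := by nlinarith
  have h2 : j^2 < (T+1)^2 := by nlinarith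
  have hjT : |j| < T + 1 := by
    by_contra h'; push_neg at h'; nlinarith [sq_abs j]
  have h3 : T < |j| := by
    by_contra h'; push_neg at h'; nlinarith [sq_abs j, abs_nonneg j]
  omega

lemma aux_no_rational_eigen (a b c d α β : ℤ)
    (ha : 0 < a) (hb : 0 < b) (hc : 0 < c) (hd : 0 < d)
    (hdet : a*d - b*c = 1 ∨ a*d - b*c = -1)
    (hβ : β ≠ 0)
    (hq : c*α^2 + (d-a)*α*β - b*β^2 = 0) : False := by
  set k : ℤ := 2*c*α + (d-a)*β with hk
  have hksq : k^2 = ((d-a)^2 + 4*b*c) * β^2 := by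
    rw [hk]; linear_combination 4*c*hq
  have hdvd : β ∣ k := by
    rw [← Int.pow_dvd_pow_iff (two_ne_zero)]
    exact ⟨(d-a)^2 + 4*b*c, by linarith [hksq, mul_comm (((d-a))^2 + 4*b*c) (β^2)]⟩
  obtain ⟨j, hj⟩ := hdvd
  have hβ2 : β^2 ≠ 0 := pow_ne_zero _ hβ
  have hD : (d-a)^2 + 4*b*c = j^2 := by
    have : ((d-a)^2 + 4*b*c) * β^2 = j^2 * β^2 := by
      rw [← hksq, hj]; ring
    exact mul_right_cancel₀ hβ2 this
  rcases hdet with h1 | h1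
  · have hT : 3 ≤ a + d := by nlinarith
    have : j^2 = (a+d)^2 - 4 := by nlinarith
    exact aux_sq_sub j (a+d) hT this
  · have hT : 2 ≤ a + d := by omega
    have : j^2 = (a+d)^2 + 4 := by nlinarith
    exact aux_sq_add j (a+d) hT this

lemma aux_commute (M N : Matrix (Fin 2) (Fin 2) ℤ)
    (hMpos : ∀ k l, 0 < M k l) (hNpos : ∀ k l, 0 < N k l)
    (hMdet : M.det = 1 ∨ M.det = -1)
    (u w μ ν : ℝ) (huw : ¬ (u = 0 ∧ w = 0))
    (hM0 : (M 0 0 : ℝ)*u + (M 0 1 : ℝ)*w = μ*u)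
    (hM1 : (M 1 0 : ℝ)*u + (M 1 1 : ℝ)*w = μ*w)
    (hN0 : (N 0 0 : ℝ)*u + (N 0 1 : ℝ)*w = ν*u)
    (hN1 : (N 1 0 : ℝ)*u + (N 1 1 : ℝ)*w = ν*w) :
    M * N = N * M := by
  have ha := hMpos 0 0; have hb := hMpos 0 1; have hc := hMpos 1 0; have hd := hMpos 1 1
  have hbR : (0:ℝ) < (M 0 1 : ℝ) := by exact_mod_cast hb
  have hcR : (0:ℝ) < (M 1 0 : ℝ) := by exact_mod_cast hc
  -- w ≠ 0 and u ≠ 0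
  have hw : w ≠ 0 := by
    intro hw0
    have hu0 : u = 0 := by
      have := hM1; rw [hw0] at this
      simp at this
      rcases this with h | h
      · exact absurd h hc.ne'
      · exact h
    exact huw ⟨hu0, hw0⟩
  have hu : u ≠ 0 := by
    intro hu0
    have hw0 : w = 0 := by
      have := hM0; rw [hu0] at this
      simp at this
      rcases this with h | h
      · exact absurd h hb.ne'
      · exact h
    exact hw hw0
  -- quadratic relations
  have hQM : (M 1 0 : ℝ)*u^2 + ((M 1 1 : ℝ) - (M 0 0 : ℝ))*u*w - (M 0 1 : ℝ)*w^2 = 0 := by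
    linear_combination u*hM1 - w*hM0
  have hQN : (N 1 0 : ℝ)*u^2 + ((N 1 1 : ℝ) - (N 0 0 : ℝ))*u*w - (N 0 1 : ℝ)*w^2 = 0 := by
    linear_combination u*hN1 - w*hN0
  set α : ℤ := M 0 1 * (N 1 1 - N 0 0) - N 0 1 * (M 1 1 - M 0 0) with hαdef
  set β : ℤ := M 1 0 * N 0 1 - M 0 1 * N 1 0 with hβdef
  set γ : ℤ := M 1 0 * (N 1 1 - N 0 0) - N 1 0 * (M 1 1 - M 0 0) with hγdef
  have hβu : (β:ℝ) * u = (α:ℝ) * w := by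
    have h1 : u * ((β:ℝ)*u - (α:ℝ)*w) = 0 := by
      push_cast [hβdef, hαdef]
      linear_combination (N 0 1 : ℝ)*hQM - (M 0 1 : ℝ)*hQN
    rcases mul_eq_zero.mp h1 with h | h
    · exact absurd h hu
    · linarith
  have hγu : (γ:ℝ) * u = (β:ℝ) * w := by
    have h1 : w * ((γ:ℝ)*u - (β:ℝ)*w) = 0 := by
      push_cast [hβdef, hγdef]
      linear_combination (M 1 0 : ℝ)*hQN - (N 1 0 : ℝ)*hQM
    rcases mul_eq_zero.mp h1 with h | h
    · exact absurd h hw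
    · linarith
  by_cases hβ0 : β = 0
  · -- then α = 0 and γ = 0, so commute
    have hα0 : α = 0 := by
      have : (α:ℝ) * w = 0 := by rw [← hβu, hβ0]; simp
      rcases mul_eq_zero.mp this with h | h
      · exact_mod_cast h
      · exact absurd h hw
    have hγ0 : γ = 0 := by
      have : (γ:ℝ) * u = 0 := by rw [hγu, hβ0]; simp
      rcases mul_eq_zero.mp this with h | h
      · exact_mod_cast h
      · exact absurd h hu
    rw [hβdef] at hβ0
    rw [hαdef] at hα0
    rw [hγdef] at hγ0
    ext i j
    fin_cases i <;> fin_cases j <;>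
      simp [Matrix.mul_apply, Fin.sum_univ_two] <;> linarith
  · -- β ≠ 0 : rationality, contradiction
    exfalso
    have hβR : (β:ℝ) ≠ 0 := Int.cast_ne_zero.mpr hβ0
    have hkey : ((M 1 0 * α^2 + (M 1 1 - M 0 0)*α*β - M 0 1 * β^2 : ℤ) : ℝ) = 0 := by
      push_cast
      have h2 : w^2 * ((M 1 0 : ℝ) * α^2 + ((M 1 1 : ℝ) - (M 0 0 : ℝ))*α*β - (M 0 1 : ℝ)*β^2) = 0 := by
        linear_combination (β:ℝ)^2 * hQM - ((M 1 0 : ℝ)*((β:ℝ)*u + (α:ℝ)*w) + ((M 1 1 : ℝ) - (M 0 0:ℝ))*(β:ℝ)*w) * hβu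
      rcases mul_eq_zero.mp h2 with h | h
      · exact absurd (pow_eq_zero_iff two_ne_zero |>.mp h) hw
      · linarith
    have hkeyZ : M 1 0 * α^2 + (M 1 1 - M 0 0)*α*β - M 0 1 * β^2 = 0 := by exact_mod_cast hkey
    refine aux_no_rational_eigen (M 0 0) (M 0 1) (M 1 0) (M 1 1) α β ha hb hc hd ?_ hβ0 (by linarith)
    rcases hMdet with h | h <;> [left; right] <;>
      · rw [Matrix.det_fin_two] at h; linarith

/-- A family of positive matrices in `GL(2,ℤ)` is irreducible
(the only common invariant subspaces of `ℝ²` are `{0}` and `ℝ²`) if and only if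
some pair of its members does not commute. -/
theorem positive_family_irreducible_iff_noncommuting
    (m : ℕ) (A : Fin m → Matrix (Fin 2) (Fin 2) ℤ)
    (hdet : ∀ i, (A i).det = 1 ∨ (A i).det = -1)
    (hpos : ∀ i k l, 0 < A i k l) :
    (∀ V : Submodule ℝ (Fin 2 → ℝ),
        (∀ i, V.map ((A i).map (Int.cast : ℤ → ℝ)).mulVecLin = V) → V = ⊥ ∨ V = ⊤)
      ↔ ∃ i j, i ≠ j ∧ A i * A j ≠ A j * A i := by
  constructor
  · intro hirr
    by_contra hnc
    push_neg at hnc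
    have hcomm : ∀ i j, A i * A j = A j * A i := by
      intro i j
      by_cases h : i = j
      · rw [h]
      · exact hnc i j h
    rcases Nat.eq_zero_or_pos m with hm | hm
    · -- m = 0 : any line is invariant
      set V : Submodule ℝ (Fin 2 → ℝ) := ℝ ∙ (![1, 0] : Fin 2 → ℝ) with hVdef
      rcases hirr V (by subst hm; exact fun i => i.elim0) with h | h
      · have : (![1, 0] : Fin 2 → ℝ) ∈ V := Submodule.mem_span_singleton_self _
        rw [h, Submodule.mem_bot] at this
        have := congrFun this 0
        norm_num at this
      · have : (![0, 1] : Fin 2 → ℝ) ∈ V := by rw [h]; trivial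
        rw [hVdef, Submodule.mem_span_singleton] at this
        obtain ⟨t, ht⟩ := this
        have h1 := congrFun ht 1
        norm_num at h1
    · -- m ≥ 1 : common eigenvector of the commuting family
      set i0 : Fin m := ⟨0, hm⟩ with hi0
      set M : Matrix (Fin 2) (Fin 2) ℤ := A i0 with hM
      have ha := hpos i0 0 0; have hb := hpos i0 0 1
      have hc := hpos i0 1 0; have hd := hpos i0 1 1
      have hbR : (0:ℝ) < (M 0 1 : ℝ) := by exact_mod_cast hb
      have hcR : (0:ℝ) < (M 1 0 : ℝ) := by exact_mod_cast hc
      set s : ℝ := Real.sqrt (((M 1 1 : ℝ) - (M 0 0 : ℝ))^2 + 4*(M 0 1 : ℝ)*(M 1 0 : ℝ)) with hsdef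
      have hs2 : s^2 = ((M 1 1 : ℝ) - (M 0 0 : ℝ))^2 + 4*(M 0 1 : ℝ)*(M 1 0 : ℝ) := by
        rw [hsdef]
        exact Real.sq_sqrt (by positivity)
      have hsgt : |(M 1 1 : ℝ) - (M 0 0 : ℝ)| < s := by
        rw [hsdef, ← Real.sqrt_sq_eq_abs]
        exact Real.sqrt_lt_sqrt (sq_nonneg _) (by nlinarith)
      set lam : ℝ := (((M 0 0 : ℝ) + (M 1 1 : ℝ)) + s)/2 with hlamdef
      have hlam : lam^2 - ((M 0 0 : ℝ) + (M 1 1 : ℝ))*lam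
          + ((M 0 0 : ℝ)*(M 1 1 : ℝ) - (M 0 1 : ℝ)*(M 1 0 : ℝ)) = 0 := by
        rw [hlamdef]; linear_combination hs2/4
      have hv1pos : 0 < lam - (M 0 0 : ℝ) := by
        rw [hlamdef]
        have := neg_abs_le ((M 1 1 : ℝ) - (M 0 0 : ℝ))
        linarith
      set v₀ : Fin 2 → ℝ := ![(M 0 1 : ℝ), lam - (M 0 0 : ℝ)] with hv₀
      have heig : (M.map (Int.cast : ℤ → ℝ)).mulVec v₀ = lam • v₀ := by
        funext k
        fin_cases k <;>
          simp [Matrix.mulVec, dotProduct, Fin.sum_univ_two, Matrix.map_apply, hv₀]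
        · ring
        · linear_combination -hlam
      set V : Submodule ℝ (Fin 2 → ℝ) := ℝ ∙ v₀ with hVdef
      have hVinv : ∀ i, V.map ((A i).map (Int.cast : ℤ → ℝ)).mulVecLin = V := by
        intro i
        set B : Matrix (Fin 2) (Fin 2) ℝ := (A i).map (Int.cast : ℤ → ℝ) with hB
        set w : Fin 2 → ℝ := B.mulVec v₀ with hwdef
        have hcast : ∀ X Y : Matrix (Fin 2) (Fin 2) ℤ,
            (X * Y).map (Int.cast : ℤ → ℝ) = X.map Int.cast * Y.map Int.cast := by
          intro X Y
          ext k l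
          simp [Matrix.map_apply, Matrix.mul_apply, Fin.sum_univ_two]
        have heigw : (M.map (Int.cast : ℤ → ℝ)).mulVec w = lam • w := by
          rw [hwdef, Matrix.mulVec_mulVec, ← hcast, hcomm i0 i, hcast, ← Matrix.mulVec_mulVec,
            heig, Matrix.mulVec_smul]
        have hrow0 : (M 0 0 : ℝ) * w 0 + (M 0 1 : ℝ) * w 1 = lam * w 0 := by
          have := congrFun heigw 0
          simp [Matrix.mulVec, dotProduct, Fin.sum_univ_two, Matrix.map_apply] at this
          linarith
        have hw0pos : 0 < w 0 := by
          have e : w 0 = (A i 0 0 : ℝ) * (M 0 1 : ℝ) + (A i 0 1 : ℝ) * (lam - (M 0 0 : ℝ)) := by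
            simp [hwdef, hB, Matrix.mulVec, dotProduct, Fin.sum_univ_two, Matrix.map_apply, hv₀]
          rw [e]
          have h1 : (0:ℝ) < (A i 0 0 : ℝ) := by exact_mod_cast hpos i 0 0
          have h2 : (0:ℝ) < (A i 0 1 : ℝ) := by exact_mod_cast hpos i 0 1
          positivity
        have hwv : w = (w 0 / (M 0 1 : ℝ)) • v₀ := by
          funext k
          fin_cases k <;> simp [hv₀] <;> field_simp
          · linarith
        rw [hVdef, Submodule.map_span, Set.image_singleton, Matrix.mulVecLin_apply, ← hwdef, hwv,
          Submodule.span_singleton_smul_eq (isUnit_iff_ne_zero.mpr (by positivity))]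
      rcases hirr V hVinv with h | h
      · have : v₀ ∈ V := Submodule.mem_span_singleton_self _
        rw [h, Submodule.mem_bot] at this
        have h0 := congrFun this 0
        simp [hv₀] at h0
        exact absurd h0 hb.ne'
      · have hmem : (![(M 0 1 : ℝ), lam - (M 0 0 : ℝ) + 1] : Fin 2 → ℝ) ∈ V := by rw [h]; trivial
        rw [hVdef, Submodule.mem_span_singleton] at hmem
        obtain ⟨t, ht⟩ := hmem
        have h0 := congrFun ht 0
        have h1 := congrFun ht 1
        simp [hv₀] at h0 h1
        have ht1 : t = 1 := mul_right_cancel₀ (ne_of_gt hbR) (by rw [one_mul]; exact h0)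
        rw [ht1] at h1
        linarith
  · rintro ⟨i, j, hij, hnc⟩ V hV
    by_contra hcon
    push_neg at hcon
    obtain ⟨hbot, htop⟩ := hcon
    obtain ⟨v, hvV, hv⟩ := Submodule.exists_mem_ne_zero_of_ne_bot hbot
    have hfr2 : Module.finrank ℝ (Fin 2 → ℝ) = 2 := by simp
    have hfrle : Module.finrank ℝ V ≤ 1 := by
      by_contra hgt
      push_neg at hgt
      have hle2 : Module.finrank ℝ V ≤ 2 := le_trans V.finrank_le (le_of_eq hfr2)
      exact htop (Submodule.eq_top_of_finrank_eq (by omega))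
    have hspan : V = (ℝ ∙ v) := by
      refine (Submodule.eq_of_le_of_finrank_le ((Submodule.span_singleton_le_iff_mem v V).mpr hvV) ?_).symm
      rwa [finrank_span_singleton hv]
    -- eigenvector equations
    have heig : ∀ k : Fin m, ∃ μ : ℝ,
        (A k 0 0 : ℝ) * v 0 + (A k 0 1 : ℝ) * v 1 = μ * v 0 ∧
        (A k 1 0 : ℝ) * v 0 + (A k 1 1 : ℝ) * v 1 = μ * v 1 := by
      intro k
      have hmem : ((A k).map (Int.cast : ℤ → ℝ)).mulVecLin v ∈ V := by
        rw [← hV k]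
        exact Submodule.mem_map_of_mem hvV
      rw [hspan, Submodule.mem_span_singleton] at hmem
      obtain ⟨μ, hμ⟩ := hmem
      refine ⟨μ, ?_, ?_⟩
      · have := congrFun hμ 0
        simp [Matrix.mulVecLin_apply, Matrix.mulVec, dotProduct,
          Fin.sum_univ_two, Matrix.map_apply] at this
        linarith
      · have := congrFun hμ 1
        simp [Matrix.mulVecLin_apply, Matrix.mulVec, dotProduct,
          Fin.sum_univ_two, Matrix.map_apply] at this
        linarith
    obtain ⟨μ, hM0, hM1⟩ := heig i
    obtain ⟨ν, hN0, hN1⟩ := heig j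
    have huw : ¬ (v 0 = 0 ∧ v 1 = 0) := by
      rintro ⟨h0, h1⟩
      apply hv
      ext k
      fin_cases k <;> simpa
    exact hnc (aux_commute (A i) (A j) (hpos i) (hpos j) (hdet i) (v 0) (v 1) μ ν huw hM0 hM1 hN0 hN1)

end
end

section
/- Let A₁,…,A_m ∈ GL(2,ℤ) (m ≥ 1) be hyperbolic matrices (no eigenvalue of modulus 1). Then exactly one of the following alternatives holds: either there exist indices i ≠ j with A_i·A_j ≠ A_j·A_i; or the A_i pairwise commute, and in that case there exist a hyperbolic matrix B ∈ GL(2,ℤ), nonzero integers n₁,…,n_m, and signs ε₁,…,ε_m ∈ {+1, −1} such that A_i = ε_i·B^{n_i} for every i = 1,…,m. -/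
noncomputable section

/-- A matrix in `GL(2,ℤ)` (represented as a unit of the ring of integer `2×2`
matrices) is hyperbolic if its characteristic polynomial has no complex root of
modulus `1`. -/
def IsHyperbolicGL2 (B : (Matrix (Fin 2) (Fin 2) ℤ)ˣ) : Prop :=
  ∀ z : ℂ, (((B : Matrix (Fin 2) (Fin 2) ℤ)).map (Int.cast : ℤ → ℂ)).charpoly.IsRoot z →
    ‖z‖ ≠ 1

/-!
Let `U` be hyperbolic with trace `t` and discriminant `D = t² - 4 det U`; then `D > 0` and `D`
is not a square, since otherwise `X² - t X ± 1` would have a root on the unit circle. An integer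
matrix `M` commuting with `U` satisfies `2D • M = (D tr M - t β) • 1 + 2β • U` with
`β = 2 tr (M U) - tr M · t`, so it acts on the two real eigenlines of `U` by
`χ(M), χ'(M) = (tr M ± β / √D) / 2`. On the centralizer of `U` in `GL(2,ℤ)`, `V ↦ log |χ(V)|` is
a homomorphism to `ℝ`. Its kernel is `{±1}`, because `√D` is irrational, and its image is
discrete, because `(tr V, β(V))` determines `V` and is bounded in terms of `χ(V)` and
`χ'(V) = ±1 / χ(V)`. So the image is generated by `log |χ(B)|` for some `B`, every element of the
centralizer is `±Bⁿ`, and `B` is hyperbolic because `|χ(B)| ≠ 1`.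
-/

open Matrix Polynomial Set

local notation "M₂" => Matrix (Fin 2) (Fin 2) ℤ

theorem AddSubgroup.exists_pos_eq_closure_of_finite_inter_Ioc {G : Type*} [AddCommGroup G]
    [LinearOrder G] [IsOrderedAddMonoid G] [Archimedean G] {H : AddSubgroup G} {c : G}
    (hcH : c ∈ H) (hc : 0 < c) (hfin : ((H : Set G) ∩ Ioc 0 c).Finite) :
    ∃ a, 0 < a ∧ H = closure {a} := by
  obtain ⟨a, ⟨haH, ha, hac⟩, hmin⟩ := exists_min_image _ id hfin ⟨c, hcH, hc, le_rfl⟩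
  refine ⟨a, ha, cyclic_of_min ⟨⟨haH, ha⟩, fun g ⟨hgH, hg⟩ => ?_⟩⟩
  rcases le_total g c with hgc | hcg
  · exact hmin g ⟨hgH, hg, hgc⟩
  · exact hac.trans hcg

section QuadraticRoots

variable {t d : ℤ}

theorem sq_sub_four_mul_nonneg_of_forall_norm_ne_one (hd : |d| = 1)
    (h : ∀ z : ℂ, z ^ 2 - t * z + d = 0 → ‖z‖ ≠ 1) : 0 ≤ t ^ 2 - 4 * d := by
  by_contra! hneg
  have hw : √(4 * d - t ^ 2 : ℝ) ^ 2 = 4 * d - t ^ 2 :=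
    Real.sq_sqrt (by exact_mod_cast (by linarith : 0 ≤ 4 * d - t ^ 2))
  set z : ℂ := ⟨t / 2, √(4 * d - t ^ 2 : ℝ) / 2⟩
  have hnorm : ‖z‖ ^ 2 = d := by
    rw [Complex.sq_norm, Complex.normSq_mk]
    linear_combination hw / 4
  rw [abs_of_nonneg (by exact_mod_cast hnorm ▸ sq_nonneg ‖z‖)] at hd
  refine h z ?_ ?_
  · rw [sq z]
    apply Complex.ext
    · simp only [Complex.add_re, Complex.sub_re, Complex.mul_re, Complex.intCast_re,
        Complex.intCast_im, zero_mul, sub_zero, Complex.zero_re, z]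
      linear_combination -hw / 4
    · simp only [Complex.add_im, Complex.sub_im, Complex.mul_im, Complex.intCast_re,
        Complex.intCast_im, zero_mul, add_zero, Complex.zero_im, z]
      ring
  · rw [hd, Int.cast_one] at hnorm
    exact (pow_eq_one_iff_of_nonneg (norm_nonneg z) two_ne_zero).mp hnorm

theorem not_isSquare_sq_sub_four_mul_of_forall_norm_ne_one (hd : |d| = 1)
    (h : ∀ z : ℂ, z ^ 2 - t * z + d = 0 → ‖z‖ ≠ 1) : ¬ IsSquare (t ^ 2 - 4 * d) := by
  rintro ⟨r, hr⟩
  obtain ⟨p, hp⟩ : (2 : ℤ) ∣ t + r := by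
    have h2 : (2 : ℤ) ∣ (t + r) * (t - r) := ⟨2 * d, by linear_combination hr⟩
    rcases Int.prime_two.dvd_or_dvd h2 with h | h
    · exact h
    · exact (by ring : t - r + 2 * r = t + r) ▸ dvd_add h (dvd_mul_right 2 r)
  have hroot : p * (t - p) = d :=
    mul_left_cancel₀ (four_ne_zero' ℤ) (by linear_combination (2 * p - t + r) * hp + hr)
  have hp1 : |p| = 1 :=
    Int.eq_one_of_mul_eq_one_right (abs_nonneg p) (b := |t - p|) (by rw [← abs_mul, hroot, hd])
  refine h p ?_ ?_
  · exact_mod_cast (by linear_combination -hroot : p ^ 2 - t * p + d = 0)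
  · rw [Complex.norm_intCast, ← Int.cast_abs, hp1, Int.cast_one]

end QuadraticRoots

namespace Matrix

section CommRing

variable {R : Type*} [CommRing R]

def discrForm (M N : Matrix (Fin 2) (Fin 2) R) : R :=
  2 * (M * N).trace - M.trace * N.trace

theorem discrForm_self (M : Matrix (Fin 2) (Fin 2) R) :
    discrForm M M = M.trace ^ 2 - 4 * M.det := by
  simp only [discrForm, trace_fin_two, det_fin_two, mul_apply, Fin.sum_univ_two]
  ring

theorem discrForm_one_left (U : Matrix (Fin 2) (Fin 2) R) : discrForm 1 U = 0 := by
  simp [discrForm, trace_fin_two]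

variable {M U : Matrix (Fin 2) (Fin 2) R}

theorem two_discrForm_smul_of_commute (h : Commute M U) :
    (2 * discrForm U U) • M =
      (discrForm U U * M.trace - U.trace * discrForm M U) • 1 + (2 * discrForm M U) • U := by
  have e := congrFun₂ h.eq
  have e₀₁ := e 0 1
  have e₁₀ := e 1 0
  have e₀₀ := e 0 0
  simp only [mul_apply, Fin.sum_univ_two] at e₀₁ e₁₀ e₀₀
  ext i j
  fin_cases i <;> fin_cases j <;>
    simp only [discrForm, trace_fin_two, mul_apply, Fin.sum_univ_two, smul_apply, smul_eq_mul,
      add_apply, one_apply] <;> grind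

theorem discrForm_sq_of_commute (h : Commute M U) :
    discrForm M U ^ 2 = discrForm M M * discrForm U U := by
  have e := congrFun₂ h.eq
  have e₀₁ := e 0 1
  have e₁₀ := e 1 0
  have e₀₀ := e 0 0
  simp only [mul_apply, Fin.sum_univ_two] at e₀₁ e₁₀ e₀₀
  simp only [discrForm, trace_fin_two, mul_apply, Fin.sum_univ_two]
  grind

end CommRing

theorem charpoly_fin_two_eq_mul {K : Type*} [CommRing K] [Nontrivial K] {A : Matrix (Fin 2) (Fin 2) K} {a b : K}
    (htr : A.trace = a + b) (hdet : A.det = a * b) :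
    A.charpoly = (X - C a) * (X - C b) := by
  rw [charpoly_fin_two, htr, hdet, C_add, C_mul]
  ring

theorem abs_det_units (V : M₂ˣ) : |(V : M₂).det| = 1 :=
  Int.isUnit_iff_abs_eq.mp ((isUnit_iff_isUnit_det _).mp V.isUnit)

/-- For `M` commuting with `U`, `eigenvalAlong U M` and `eigenvalAlong' U M` are the eigenvalues of
`M` on the eigenlines of `U` belonging to `(tr U + √D) / 2` and `(tr U - √D) / 2`, where
`D = discrForm U U` (see `mulVec_eq_eigenvalAlong_smul`). -/
def eigenvalAlong (U M : M₂) : ℝ :=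
  (↑M.trace + ↑(discrForm M U) / √↑(discrForm U U)) / 2

def eigenvalAlong' (U M : M₂) : ℝ :=
  (↑M.trace - ↑(discrForm M U) / √↑(discrForm U U)) / 2

variable {U M : M₂}

theorem eigenvalAlong_add_eigenvalAlong' :
    eigenvalAlong U M + eigenvalAlong' U M = M.trace := by
  simp only [eigenvalAlong, eigenvalAlong']
  ring

theorem eigenvalAlong_sub_eigenvalAlong' :
    eigenvalAlong U M - eigenvalAlong' U M = discrForm M U / √(↑(discrForm U U) : ℝ) := by
  simp only [eigenvalAlong, eigenvalAlong']
  ring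

theorem eigenvalAlong_one : eigenvalAlong U 1 = 1 := by
  simp [eigenvalAlong, discrForm_one_left]

theorem eigenvalAlong_mul_eigenvalAlong' (hD : 0 < discrForm U U) (h : Commute M U) :
    eigenvalAlong U M * eigenvalAlong' U M = M.det := by
  have hsq : (↑(discrForm M U) : ℝ) ^ 2 = (↑M.trace ^ 2 - 4 * ↑M.det) * ↑(discrForm U U) := by
    exact_mod_cast discrForm_self M ▸ discrForm_sq_of_commute h
  have hs : √(↑(discrForm U U) : ℝ) ^ 2 = ↑(discrForm U U) :=
    Real.sq_sqrt (by exact_mod_cast hD.le)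
  have hs0 : √(↑(discrForm U U) : ℝ) ≠ 0 := by positivity
  simp only [eigenvalAlong, eigenvalAlong']
  field_simp
  linear_combination (↑M.trace ^ 2 - 4 * ↑M.det : ℝ) * hs - hsq

theorem abs_eigenvalAlong_mul_abs_eigenvalAlong' (hD : 0 < discrForm U U) {V : M₂ˣ}
    (h : Commute (V : M₂) U) : |eigenvalAlong U V| * |eigenvalAlong' U V| = 1 := by
  rw [← abs_mul, eigenvalAlong_mul_eigenvalAlong' hD h, ← Int.cast_abs, abs_det_units,
    Int.cast_one]

theorem eigenvalAlong_ne_zero (hD : 0 < discrForm U U) {V : M₂ˣ} (h : Commute (V : M₂) U) :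
    eigenvalAlong U V ≠ 0 := by
  intro h0
  simpa [h0] using abs_eigenvalAlong_mul_abs_eigenvalAlong' hD h

theorem charpoly_map_eq_mul (hD : 0 < discrForm U U) (h : Commute M U) :
    (M.map (Int.cast : ℤ → ℝ)).charpoly =
      (X - C (eigenvalAlong U M)) * (X - C (eigenvalAlong' U M)) := by
  apply charpoly_fin_two_eq_mul
  · rw [eigenvalAlong_add_eigenvalAlong']
    simp [trace_fin_two]
  · rw [eigenvalAlong_mul_eigenvalAlong' hD h]
    simp [det_fin_two]

theorem isRoot_charpoly_map_complex_iff (hD : 0 < discrForm U U) (h : Commute M U) (z : ℂ) :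
    (M.map (Int.cast : ℤ → ℂ)).charpoly.IsRoot z ↔
      z = eigenvalAlong U M ∨ z = eigenvalAlong' U M := by
  have hmap : M.map (Int.cast : ℤ → ℂ) = (M.map (Int.cast : ℤ → ℝ)).map Complex.ofRealHom := by
    ext i j
    simp
  rw [hmap, charpoly_map, charpoly_map_eq_mul hD h]
  simp [sub_eq_zero]

theorem isHyperbolicGL2_iff (hD : 0 < discrForm U U) {V : M₂ˣ} (h : Commute (V : M₂) U) :
    IsHyperbolicGL2 V ↔ |eigenvalAlong U V| ≠ 1 := by
  have hprod := abs_eigenvalAlong_mul_abs_eigenvalAlong' hD h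
  simp only [IsHyperbolicGL2, isRoot_charpoly_map_complex_iff hD h, forall_eq_or_imp, forall_eq,
    Complex.norm_real, Real.norm_eq_abs]
  refine ⟨And.left, fun h1 => ⟨h1, fun h2 => h1 ?_⟩⟩
  rwa [h2, mul_one] at hprod

theorem exists_mulVec_eq_eigenvalAlong_smul (hD : 0 < discrForm U U) :
    ∃ v ≠ 0, U.map (Int.cast : ℤ → ℝ) *ᵥ v = eigenvalAlong U U • v := by
  have hroot : (U.map (Int.cast : ℤ → ℝ)).charpoly.eval (eigenvalAlong U U) = 0 := by
    simp [charpoly_map_eq_mul hD (Commute.refl U)]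
  rw [eval_charpoly, ← exists_mulVec_eq_zero_iff] at hroot
  obtain ⟨v, hv, hv0⟩ := hroot
  refine ⟨v, hv, ?_⟩
  rw [sub_mulVec, sub_eq_zero] at hv0
  simpa using hv0.symm

theorem mulVec_eq_eigenvalAlong_smul (hD : 0 < discrForm U U) (h : Commute M U)
    {v : Fin 2 → ℝ} (hv : U.map (Int.cast : ℤ → ℝ) *ᵥ v = eigenvalAlong U U • v) :
    M.map (Int.cast : ℤ → ℝ) *ᵥ v = eigenvalAlong U M • v := by
  have key := congrArg (fun X => (Int.castRingHom ℝ).mapMatrix X *ᵥ v)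
    (two_discrForm_smul_of_commute h)
  simp only [map_add, map_zsmul, map_one, ← Int.cast_smul_eq_zsmul ℝ, add_mulVec, smul_mulVec,
    one_mulVec, RingHom.mapMatrix_apply, Int.coe_castRingHom, hv, smul_smul, ← add_smul] at key
  have hcoef : (↑(discrForm U U * M.trace - U.trace * discrForm M U) +
      ↑(2 * discrForm M U) * eigenvalAlong U U : ℝ) = ↑(2 * discrForm U U) * eigenvalAlong U M := by
    simp only [eigenvalAlong]
    push_cast
    ring
  rw [hcoef, ← smul_smul] at key
  exact smul_right_injective _ (by positivity) key

theorem eigenvalAlong_mul (hD : 0 < discrForm U U) {N : M₂} (hM : Commute M U)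
    (hN : Commute N U) : eigenvalAlong U (M * N) = eigenvalAlong U M * eigenvalAlong U N := by
  obtain ⟨v, hv0, hv⟩ := exists_mulVec_eq_eigenvalAlong_smul hD
  have hMN := mulVec_eq_eigenvalAlong_smul hD (hM.mul_left hN) hv
  have hmap : (M * N).map (Int.cast : ℤ → ℝ) = M.map (↑) * N.map (↑) :=
    Matrix.map_mul (f := Int.castRingHom ℝ)
  rw [hmap, ← mulVec_mulVec, mulVec_eq_eigenvalAlong_smul hD hN hv, mulVec_smul,
    mulVec_eq_eigenvalAlong_smul hD hM hv, smul_smul, mul_comm] at hMN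
  exact smul_left_injective ℝ hv0 hMN.symm

theorem eigenvalAlong_inv (hD : 0 < discrForm U U) {V : M₂ˣ} (h : Commute (V : M₂) U) :
    eigenvalAlong U ↑V⁻¹ = (eigenvalAlong U V)⁻¹ := by
  refine eq_inv_of_mul_eq_one_left ?_
  rw [← eigenvalAlong_mul hD h.units_inv_left h, Units.inv_mul, eigenvalAlong_one]

theorem eigenvalAlong_zpow (hD : 0 < discrForm U U) {V : M₂ˣ} (h : Commute (V : M₂) U) (n : ℤ) :
    eigenvalAlong U ↑(V ^ n) = eigenvalAlong U V ^ n := by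
  have hne := eigenvalAlong_ne_zero hD h
  induction n using Int.induction_on with
  | zero => simp [eigenvalAlong_one]
  | succ k ih =>
    rw [_root_.zpow_add_one, Units.val_mul, eigenvalAlong_mul hD (h.units_zpow_left k) h, ih,
      zpow_add_one₀ hne]
  | pred k ih =>
    rw [_root_.zpow_sub_one, Units.val_mul,
      eigenvalAlong_mul hD (h.units_zpow_left _) h.units_inv_left, ih, eigenvalAlong_inv hD h,
      zpow_sub_one₀ hne]

theorem log_abs_eigenvalAlong_mul_zpow_inv (hD : 0 < discrForm U U) {V B : M₂ˣ}
    (hV : Commute (V : M₂) U) (hB : Commute (B : M₂) U) (n : ℤ) :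
    Real.log |eigenvalAlong U ↑(V * (B ^ n)⁻¹)| =
      Real.log |eigenvalAlong U V| - n * Real.log |eigenvalAlong U B| := by
  have hVne := abs_ne_zero.mpr (eigenvalAlong_ne_zero hD hV)
  have hBne := abs_ne_zero.mpr (eigenvalAlong_ne_zero hD hB)
  rw [Units.val_mul, eigenvalAlong_mul hD hV (hB.units_zpow_left n).units_inv_left,
    eigenvalAlong_inv hD (hB.units_zpow_left n), eigenvalAlong_zpow hD hB, abs_mul, abs_inv,
    abs_zpow, Real.log_mul hVne (inv_ne_zero (zpow_ne_zero n hBne)), Real.log_inv, Real.log_zpow,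
    sub_eq_add_neg]

theorem eq_smul_one_of_eigenvalAlong_eq_intCast (hD : 0 < discrForm U U)
    (hsq : ¬ IsSquare (discrForm U U)) (h : Commute M U) {k : ℤ}
    (hk : eigenvalAlong U M = k) : M = k • 1 := by
  have hirr : Irrational √(↑(discrForm U U) : ℝ) :=
    (irrational_sqrt_intCast_iff_of_nonneg hD.le).mpr hsq
  have hs0 : √(↑(discrForm U U) : ℝ) ≠ 0 := by positivity
  have hβ : (↑(discrForm M U) : ℝ) = ↑(2 * k - M.trace) * √(↑(discrForm U U) : ℝ) := by
    simp only [eigenvalAlong] at hk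
    field_simp at hk
    push_cast
    linarith
  have htr : M.trace = 2 * k := by
    by_contra hne
    exact (hirr.intCast_mul (sub_ne_zero.mpr (Ne.symm hne))).ne_int _ hβ.symm
  have hβ0 : discrForm M U = 0 := by
    exact_mod_cast (hβ.trans (by simp [htr]) : (↑(discrForm M U) : ℝ) = 0)
  have key := two_discrForm_smul_of_commute h
  rw [hβ0, htr] at key
  refine smul_right_injective M₂ (by positivity : 2 * discrForm U U ≠ 0) ?_
  simp only [key, mul_zero, sub_zero, zero_smul, add_zero, smul_smul]
  ring_nf

theorem eq_smul_one_of_abs_eigenvalAlong_eq_one (hD : 0 < discrForm U U)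
    (hsq : ¬ IsSquare (discrForm U U)) (h : Commute M U) (h1 : |eigenvalAlong U M| = 1) :
    ∃ ε : ℤ, (ε = 1 ∨ ε = -1) ∧ M = ε • 1 := by
  rcases (abs_eq zero_le_one).mp h1 with h1 | h1
  · exact ⟨1, Or.inl rfl, eq_smul_one_of_eigenvalAlong_eq_intCast hD hsq h (by simpa using h1)⟩
  · exact ⟨-1, Or.inr rfl, eq_smul_one_of_eigenvalAlong_eq_intCast hD hsq h (by simpa using h1)⟩

theorem finite_setOf_commute_abs_eigenvalAlong_le (hD : 0 < discrForm U U) (R : ℝ) :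
    {M : M₂ | Commute M U ∧ |eigenvalAlong U M| ≤ R ∧ |eigenvalAlong' U M| ≤ R}.Finite := by
  have hs : 0 < √(↑(discrForm U U) : ℝ) := by positivity
  refine Finite.of_injOn (f := fun M => (M.trace, discrForm M U))
    (t := Metric.closedBall 0 (2 * R) ×ˢ Metric.closedBall 0 (√(↑(discrForm U U) : ℝ) * (2 * R)))
    ?_ ?_ (((isCompact_closedBall _ _).finite_of_discrete).prod
      (isCompact_closedBall _ _).finite_of_discrete)
  · rintro M ⟨-, hχ, hχ'⟩
    simp only [mem_prod, mem_closedBall_zero_iff, Int.norm_eq_abs]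
    constructor
    · rw [← eigenvalAlong_add_eigenvalAlong']
      exact (abs_add_le _ _).trans (by linarith)
    · have hβ : (↑(discrForm M U) : ℝ) =
          √(↑(discrForm U U) : ℝ) * (eigenvalAlong U M - eigenvalAlong' U M) := by
        rw [eigenvalAlong_sub_eigenvalAlong']
        field_simp
      rw [hβ, abs_mul, abs_of_pos hs]
      exact mul_le_mul_of_nonneg_left ((abs_sub _ _).trans (by linarith)) hs.le
  · rintro M ⟨hM, -⟩ N ⟨hN, -⟩ hMN
    simp only [Prod.mk.injEq] at hMN
    refine smul_right_injective M₂ (by positivity : 2 * discrForm U U ≠ 0) ?_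
    simp only [two_discrForm_smul_of_commute hM, two_discrForm_smul_of_commute hN, hMN]

def logAbsEigenvalAlongSubgroup (U : M₂) (hD : 0 < discrForm U U) : AddSubgroup ℝ where
  carrier := {r | ∃ V : M₂ˣ, Commute (V : M₂) U ∧ Real.log |eigenvalAlong U V| = r}
  zero_mem' := ⟨1, Commute.one_left U, by simp [eigenvalAlong_one]⟩
  add_mem' := by
    rintro _ _ ⟨V, hV, rfl⟩ ⟨W, hW, rfl⟩
    refine ⟨V * W, hV.mul_left hW, ?_⟩
    rw [Units.val_mul, eigenvalAlong_mul hD hV hW, abs_mul,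
      Real.log_mul (abs_ne_zero.mpr (eigenvalAlong_ne_zero hD hV))
        (abs_ne_zero.mpr (eigenvalAlong_ne_zero hD hW))]
  neg_mem' := by
    rintro _ ⟨V, hV, rfl⟩
    exact ⟨V⁻¹, hV.units_inv_left, by rw [eigenvalAlong_inv hD hV, abs_inv, Real.log_inv]⟩

theorem finite_logAbsEigenvalAlongSubgroup_inter_Ioc (hD : 0 < discrForm U U) (c : ℝ) :
    ((logAbsEigenvalAlongSubgroup U hD : Set ℝ) ∩ Ioc 0 c).Finite := by
  refine ((finite_setOf_commute_abs_eigenvalAlong_le hD (Real.exp c)).image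
    fun M => Real.log |eigenvalAlong U M|).subset ?_
  rintro _ ⟨⟨V, hV, rfl⟩, hpos, hle⟩
  have h0 : 0 < |eigenvalAlong U V| := abs_pos.mpr (eigenvalAlong_ne_zero hD hV)
  have h1 : 1 < |eigenvalAlong U V| := (Real.log_pos_iff h0.le).mp hpos
  refine ⟨V, ⟨hV, (Real.log_le_iff_le_exp h0).mp hle, ?_⟩, rfl⟩
  have hprod := abs_eigenvalAlong_mul_abs_eigenvalAlong' hD hV
  have : |eigenvalAlong' U V| ≤ 1 := by nlinarith [abs_nonneg (eigenvalAlong' U V)]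
  exact this.trans (Real.one_le_exp (hpos.le.trans hle))

end Matrix

namespace IsHyperbolicGL2

variable {U : M₂ˣ}

theorem norm_ne_one (hU : IsHyperbolicGL2 U) {z : ℂ}
    (hz : z ^ 2 - (U : M₂).trace * z + (U : M₂).det = 0) : ‖z‖ ≠ 1 :=
  hU z (by simpa [IsRoot, charpoly_fin_two, trace_fin_two, det_fin_two] using hz)

theorem not_isSquare_discrForm (hU : IsHyperbolicGL2 U) : ¬ IsSquare (discrForm (U : M₂) U) := by
  rw [discrForm_self]
  exact not_isSquare_sq_sub_four_mul_of_forall_norm_ne_one (abs_det_units U)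
    fun _ => hU.norm_ne_one

theorem discrForm_pos (hU : IsHyperbolicGL2 U) : 0 < discrForm (U : M₂) U := by
  refine lt_of_le_of_ne ?_ fun h => hU.not_isSquare_discrForm (h ▸ IsSquare.zero)
  rw [discrForm_self]
  exact sq_sub_four_mul_nonneg_of_forall_norm_ne_one (abs_det_units U) fun _ => hU.norm_ne_one

theorem val_ne_smul_one (hU : IsHyperbolicGL2 U) {ε : ℤ} (hε : ε = 1 ∨ ε = -1) :
    (U : M₂) ≠ ε • 1 := by
  intro h
  refine hU.norm_ne_one (z := ε) ?_ ?_
  · have htr : (U : M₂).trace = 2 * ε := by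
      rw [h, trace_smul, trace_one, Fintype.card_fin, smul_eq_mul]
      ring
    have hdet : (U : M₂).det = ε ^ 2 := by
      rw [h, det_smul, det_one, Fintype.card_fin, mul_one]
    rw [htr, hdet]
    push_cast
    ring
  · rcases hε with rfl | rfl <;> simp

theorem exists_logAbsEigenvalAlongSubgroup_eq_closure (hU : IsHyperbolicGL2 U) :
    ∃ B : M₂ˣ, Commute (B : M₂) U ∧ 0 < Real.log |eigenvalAlong (U : M₂) B| ∧
      logAbsEigenvalAlongSubgroup (U : M₂) hU.discrForm_pos =
        AddSubgroup.closure {Real.log |eigenvalAlong (U : M₂) B|} := by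
  have hD := hU.discrForm_pos
  set G := logAbsEigenvalAlongSubgroup (U : M₂) hD
  set ℓ := Real.log |eigenvalAlong (U : M₂) U|
  have hℓ : ℓ ≠ 0 := Real.log_ne_zero_of_pos_of_ne_one
    (abs_pos.mpr (eigenvalAlong_ne_zero hD (Commute.refl _)))
    ((isHyperbolicGL2_iff hD (Commute.refl _)).mp hU)
  have hℓG : |ℓ| ∈ G := by
    have hℓG : ℓ ∈ G := ⟨U, Commute.refl _, rfl⟩
    rcases abs_choice ℓ with h | h <;> rw [h]
    exacts [hℓG, G.neg_mem hℓG]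
  obtain ⟨a, ha, hGa⟩ := AddSubgroup.exists_pos_eq_closure_of_finite_inter_Ioc hℓG
    (abs_pos.mpr hℓ) (finite_logAbsEigenvalAlongSubgroup_inter_Ioc hD _)
  obtain ⟨B, hB, rfl⟩ : a ∈ G := hGa ▸ AddSubgroup.subset_closure rfl
  exact ⟨B, hB, ha, hGa⟩

theorem exists_forall_commute_eq_smul_zpow (hU : IsHyperbolicGL2 U) :
    ∃ B : M₂ˣ, IsHyperbolicGL2 B ∧ ∀ V : M₂ˣ, Commute V U →
      ∃ (n : ℤ) (ε : ℤ), (ε = 1 ∨ ε = -1) ∧ (V : M₂) = ε • ↑(B ^ n) := by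
  have hD := hU.discrForm_pos
  obtain ⟨B, hB, ha, hGa⟩ := hU.exists_logAbsEigenvalAlongSubgroup_eq_closure
  refine ⟨B, (isHyperbolicGL2_iff hD hB).mpr fun h1 => ha.ne' (by rw [h1, Real.log_one]),
    fun V hV => ?_⟩
  have hVG : Real.log |eigenvalAlong (U : M₂) V| ∈ logAbsEigenvalAlongSubgroup (U : M₂) hD :=
    ⟨V, hV.units_val, rfl⟩
  obtain ⟨n, hn⟩ := AddSubgroup.mem_closure_singleton.mp (hGa ▸ hVG)
  have hW : Commute (↑(V * (B ^ n)⁻¹) : M₂) U :=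
    hV.units_val.mul_left (hB.units_zpow_left n).units_inv_left
  have hW1 : |eigenvalAlong (U : M₂) ↑(V * (B ^ n)⁻¹)| = 1 :=
    Real.eq_one_of_pos_of_log_eq_zero (abs_pos.mpr (eigenvalAlong_ne_zero hD hW))
      (by rw [log_abs_eigenvalAlong_mul_zpow_inv hD hV.units_val hB, ← hn, zsmul_eq_mul, sub_self])
  obtain ⟨ε, hε, hWε⟩ :=
    eq_smul_one_of_abs_eigenvalAlong_eq_one hD hU.not_isSquare_discrForm hW hW1
  refine ⟨n, ε, hε, ?_⟩
  rw [← inv_mul_cancel_right V (B ^ n), Units.val_mul _ (B ^ n), hWε, smul_one_mul]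

end IsHyperbolicGL2

/-- For hyperbolic `A₁, …, A_m ∈ GL(2,ℤ)` exactly one of the
following holds: either some pair does not commute, or all pairwise commute and
there are a hyperbolic `B ∈ GL(2,ℤ)`, nonzero integers `nᵢ` and signs `εᵢ = ±1`
with `Aᵢ = εᵢ·B^{nᵢ}` for every `i`. -/
theorem hyperbolic_gl2z_family_dichotomy
    (m : ℕ) (hm : 1 ≤ m)
    (A : Fin m → (Matrix (Fin 2) (Fin 2) ℤ)ˣ)
    (hhyp : ∀ i, IsHyperbolicGL2 (A i)) :
    Xor' (∃ i j, i ≠ j ∧ A i * A j ≠ A j * A i)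
      ((∀ i j, A i * A j = A j * A i) ∧
        ∃ B : (Matrix (Fin 2) (Fin 2) ℤ)ˣ, IsHyperbolicGL2 B ∧
          ∃ (n : Fin m → ℤ) (ε : Fin m → ℤ),
            (∀ i, n i ≠ 0) ∧ (∀ i, ε i = 1 ∨ ε i = -1) ∧
            ∀ i, (A i : Matrix (Fin 2) (Fin 2) ℤ) =
              ε i • (↑(B ^ (n i)) : Matrix (Fin 2) (Fin 2) ℤ)) := by
  have hpair : (∃ i j, i ≠ j ∧ A i * A j ≠ A j * A i) ↔ ¬ ∀ i j, A i * A j = A j * A i := by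
    refine ⟨fun ⟨i, j, _, hij⟩ hall => hij (hall i j), fun hall => ?_⟩
    push Not at hall
    obtain ⟨i, j, hij⟩ := hall
    exact ⟨i, j, fun h => hij (h ▸ rfl), hij⟩
  rw [hpair]
  by_cases hall : ∀ i j, A i * A j = A j * A i
  · obtain ⟨B, hB, hcentral⟩ := (hhyp ⟨0, hm⟩).exists_forall_commute_eq_smul_zpow
    choose n ε hε hA using fun i => hcentral (A i) (hall i ⟨0, hm⟩)
    refine Or.inr ⟨⟨hall, B, hB, n, ε, fun i hn => ?_, hε, hA⟩, not_not.mpr hall⟩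
    exact (hhyp i).val_ne_smul_one (hε i) (by simpa [hn] using hA i)
  · exact Or.inl ⟨hall, fun h => hall h.1⟩

end
end
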